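/- arXiv:1612.03873 — 4 statements merged into one kernel-verified Lean document; each statement's English description precedes it below -/
import Mathlib

section
/- For every directed graph G with n labeled vertices and k labeled edges, the sum of α(H) over all 2^k subgraphs H of G equals (−1)^k · σ(G). -/
/-! Both sides are extended to induced subgraphs `G[W]` and shown to satisfy, for `W ≠ ∅`, the
same recursion `∑ (-1)^|W \ Z| X(Z) = 0` over the sets `Z ⊆ W` that no edge of `G[W]` enters
from `W \ Z`; as they agree for `W = ∅`, they agree everywhere by induction.

On the acyclic side, an edge entering `Z` from outside lies on no cycle and cancels, so the
recursion counts each acyclic subgraph `S` of `G[W]` with the alternating sum over the subsets of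
its sources, which vanishes because the set of sources is nonempty.

On the other side, the sets `Z` that are also strongly semiconnected are exactly the unions of
families of source strong components of `G[W]`; the sign of such a term depends only on the size
of the family, so the sum is again an alternating sum over the subsets of a nonempty set. -/

open Finset

open scoped Classical Nat

noncomputable section

/-- A directed graph with `n` labeled vertices and `k` labeled edges:
the `ℓ`-th edge is the ordered pair `G ℓ = (a, b)` (an edge from `a` to `b`; loops allowed). -/
abbrev DG (n k : ℕ) := Fin k → Fin n × Fin n

namespace DG

variable {n k : ℕ}

/-- `step G S a b`: the subgraph of `G` with edge-label set `S` has an edge from `a` to `b`. -/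
def step (G : DG n k) (S : Finset (Fin k)) (a b : Fin n) : Prop :=
  ∃ e ∈ S, G e = (a, b)

/-- The subgraph of `G` with edge-label set `S` contains no directed cycle. -/
def Acyclic (G : DG n k) (S : Finset (Fin k)) : Prop :=
  ∀ a : Fin n, ¬ Relation.TransGen (step G S) a a

/-- The edge `e` lies on a directed cycle of the subgraph of `G` with edge set `S`
(equivalently, there is a directed path from the head of `e` back to its tail). -/
def OnCycle (G : DG n k) (S : Finset (Fin k)) (e : Fin k) : Prop :=
  Relation.ReflTransGen (step G S) (G e).2 (G e).1

/-- Strongly semiconnected: every edge lies on a directed cycle. -/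
def SSC (G : DG n k) (S : Finset (Fin k)) : Prop :=
  ∀ e ∈ S, OnCycle G S e

/-- Strongly connected: every ordered pair of vertices is joined by a directed path. -/
def StronglyConnected (G : DG n k) (S : Finset (Fin k)) : Prop :=
  ∀ a b : Fin n, Relation.ReflTransGen (step G S) a b

/-- Adjacency in the underlying undirected graph. -/
def adj (G : DG n k) (S : Finset (Fin k)) (a b : Fin n) : Prop :=
  ∃ e ∈ S, G e = (a, b) ∨ G e = (b, a)

/-- `β₀`: the number of connected components of the underlying undirected graph
(isolated vertices count as components). -/
def beta0 (G : DG n k) (S : Finset (Fin k)) : ℕ :=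
  Nat.card (Quot (adj G S))

/-- `α(H) = (−1)^{#edges}` if `H` is acyclic, `0` otherwise. -/
def alpha (G : DG n k) (S : Finset (Fin k)) : ℤ :=
  if Acyclic G S then (-1) ^ S.card else 0

/-- `σ(H) = (−1)^{β₁}` if `H` is strongly semiconnected, `0` otherwise;
here `β₁ = #edges − n + β₀`, and `(−1)^{#edges − n + β₀} = (−1)^{#edges + n + β₀}`. -/
def sigma (G : DG n k) (S : Finset (Fin k)) : ℤ :=
  if SSC G S then (-1) ^ (S.card + n + beta0 G S) else 0

/-- The vertex `v` is isolated: incident to no edge. -/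
def isolated (G : DG n k) (v : Fin n) : Prop :=
  ∀ e : Fin k, (G e).1 ≠ v ∧ (G e).2 ≠ v

/-- The vertex `v` is a sink: no edge starts at it. -/
def isSink (G : DG n k) (v : Fin n) : Prop :=
  ∀ e : Fin k, (G e).1 ≠ v

end DG

open Relation

theorem Relation.TransGen.mono_of_invariant {α : Type*} {r s : α → α → Prop} {p : α → Prop}
    (hrs : ∀ x y, r x y → p x → s x y) (hp : ∀ x y, r x y → p y) {a b : α}
    (h : TransGen r a b) (ha : p a) : TransGen s a b := by
  induction h using TransGen.head_induction_on with
  | single hab => exact .single (hrs _ _ hab ha)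
  | head hac _ ih => exact .head (hrs _ _ hac ha) (ih (hp _ _ hac))

theorem Nat.card_quot_eq_card_image {α β : Type*} [Fintype α] [DecidableEq β]
    (r : α → α → Prop) (p : α → β) (h₁ : ∀ a b, r a b → p a = p b)
    (h₂ : ∀ a b, p a = p b → EqvGen r a b) :
    Nat.card (Quot r) = #(univ.image p) := by
  have hinj : Function.Injective (Quot.lift p h₁) := by
    rintro ⟨a⟩ ⟨b⟩ hab
    exact Quot.eqvGen_sound (h₂ a b hab)
  rw [← Nat.card_range_of_injective hinj, Set.range_quot_lift, ← Set.toFinset_range,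
    Nat.card_eq_card_toFinset]

theorem Finset.sum_powerset_sdiff {α M : Type*} [DecidableEq α] [AddCommMonoid M]
    (s : Finset α) (f : Finset α → M) :
    ∑ t ∈ s.powerset, f (s \ t) = ∑ t ∈ s.powerset, f t :=
  sum_nbij' (s \ ·) (s \ ·) (fun _ _ => mem_powerset.2 sdiff_subset)
    (fun _ _ => mem_powerset.2 sdiff_subset)
    (fun _ ht => sdiff_sdiff_eq_self (mem_powerset.1 ht))
    (fun _ ht => sdiff_sdiff_eq_self (mem_powerset.1 ht)) fun _ _ => rfl

namespace DG

variable {n k : ℕ}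

def inducedEdges (G : DG n k) (W : Finset (Fin n)) : Finset (Fin k) :=
  univ.filter fun e => (G e).1 ∈ W ∧ (G e).2 ∈ W

variable {G : DG n k} {S : Finset (Fin k)} {W Z : Finset (Fin n)} {x y : Fin n}

@[simp]
lemma mem_inducedEdges {e : Fin k} : e ∈ G.inducedEdges W ↔ (G e).1 ∈ W ∧ (G e).2 ∈ W := by
  simp [inducedEdges]

lemma inducedEdges_mono (h : W ⊆ Z) : G.inducedEdges W ⊆ G.inducedEdges Z :=
  fun _ he => by
    rw [mem_inducedEdges] at he ⊢
    exact ⟨h he.1, h he.2⟩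

@[simp]
lemma inducedEdges_univ : G.inducedEdges univ = univ := by
  ext; simp

lemma step_mono {S' : Finset (Fin k)} (h : S ⊆ S') {a b : Fin n} (hab : G.step S a b) :
    G.step S' a b :=
  let ⟨e, he, hG⟩ := hab
  ⟨e, h he, hG⟩

lemma acyclic_insert_iff {e : Fin k} (hsrc : ∀ f ∈ insert e S, (G f).2 ≠ (G e).1) :
    G.Acyclic (insert e S) ↔ G.Acyclic S := by
  refine ⟨fun h a ha => h a (TransGen.mono (fun _ _ => step_mono (subset_insert e S)) _ _ ha),
    fun h a ha => ?_⟩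
  -- every vertex on a cycle is a head, so no cycle passes through the tail of `e`
  have hhead : ∀ x y, G.step (insert e S) x y → y ≠ (G e).1 := by
    rintro x y ⟨f, hf, hfxy⟩
    simpa [hfxy] using hsrc f hf
  have hstep : ∀ x y, G.step (insert e S) x y → x ≠ (G e).1 → G.step S x y := by
    rintro x y ⟨f, hf, hfxy⟩ hx
    rcases mem_insert.1 hf with rfl | hf
    · simp [hfxy] at hx
    · exact ⟨f, hf, hfxy⟩
  obtain ⟨b, -, hba⟩ := TransGen.tail'_iff.1 ha
  exact h a (ha.mono_of_invariant hstep hhead (hhead b a hba))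

lemma alpha_insert {e : Fin k} (he : e ∉ S) (hsrc : ∀ f ∈ insert e S, (G f).2 ≠ (G e).1) :
    G.alpha (insert e S) = -G.alpha S := by
  simp only [alpha, acyclic_insert_iff hsrc, card_insert_of_notMem he, pow_succ]
  split_ifs <;> simp

lemma sum_alpha_powerset_insert {e : Fin k} (he : e ∉ S)
    (hsrc : ∀ f ∈ insert e S, (G f).2 ≠ (G e).1) :
    ∑ R ∈ (insert e S).powerset, G.alpha R = 0 := by
  rw [sum_powerset_insert he, ← sum_add_distrib]
  refine sum_eq_zero fun R hR => ?_
  have hRS := mem_powerset.1 hR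
  rw [alpha_insert (fun h => he (hRS h)) fun f hf => hsrc f (insert_subset_insert e hRS hf),
    add_neg_cancel]

lemma Acyclic.exists_source (hac : G.Acyclic S) (hS : S ⊆ G.inducedEdges W) (hW : W.Nonempty) :
    ∃ w ∈ W, ∀ e ∈ S, (G e).2 ≠ w := by
  have : IsTrans (Fin n) (TransGen (G.step S)) := ⟨fun _ _ _ => TransGen.trans⟩
  have : Std.Irrefl (TransGen (G.step S)) := ⟨hac⟩
  obtain ⟨w, hw, hmin⟩ := (Finite.wellFounded_of_trans_of_irrefl (TransGen (G.step S))).has_min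
    (W : Set (Fin n)) hW
  exact ⟨w, hw, fun e he hew =>
    hmin _ (mem_inducedEdges.1 (hS he)).1 (.single ⟨e, he, by rw [← hew]⟩)⟩

def acyclicSum (G : DG n k) (W : Finset (Fin n)) : ℤ :=
  ∑ S ∈ (G.inducedEdges W).powerset, G.alpha S

def InClosed (G : DG n k) (W Z : Finset (Fin n)) : Prop :=
  ∀ e ∈ G.inducedEdges W, (G e).2 ∈ Z → (G e).1 ∈ Z

lemma sum_alpha_heads_mem (hZW : Z ⊆ W) :
    ∑ S ∈ (G.inducedEdges W).powerset with ∀ e ∈ S, (G e).2 ∈ Z, G.alpha S =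
      if G.InClosed W Z then G.acyclicSum Z else 0 := by
  have hfilter : (G.inducedEdges W).powerset.filter (fun S => ∀ e ∈ S, (G e).2 ∈ Z) =
      ((G.inducedEdges W).filter fun e => (G e).2 ∈ Z).powerset := by
    ext S
    simp only [mem_filter, mem_powerset, subset_iff]
    grind
  rw [hfilter]
  split_ifs with hcl
  · have hE : (G.inducedEdges W).filter (fun e => (G e).2 ∈ Z) = G.inducedEdges Z := by
      ext e
      simp only [mem_filter, mem_inducedEdges]
      exact ⟨fun ⟨he, hZ⟩ => ⟨hcl e (mem_inducedEdges.2 he) hZ, hZ⟩,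
        fun ⟨h1, h2⟩ => ⟨⟨hZW h1, hZW h2⟩, h2⟩⟩
    rw [hE, acyclicSum]
  · -- an edge entering `Z` from outside lies on no cycle, so it makes the sum alternate
    obtain ⟨e, htW, hhW, hhead, htail⟩ :
        ∃ e, (G e).1 ∈ W ∧ (G e).2 ∈ W ∧ (G e).2 ∈ Z ∧ (G e).1 ∉ Z := by
      simpa [InClosed] using hcl
    have he : e ∈ (G.inducedEdges W).filter fun e => (G e).2 ∈ Z :=
      mem_filter.2 ⟨mem_inducedEdges.2 ⟨htW, hhW⟩, hhead⟩
    rw [← insert_erase he]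
    refine sum_alpha_powerset_insert (notMem_erase _ _) fun f hf hfe => htail ?_
    rw [insert_erase he] at hf
    exact hfe ▸ (mem_filter.1 hf).2

lemma sum_inClosed_acyclicSum (hW : W.Nonempty) :
    ∑ Z ∈ W.powerset, (-1) ^ #(W \ Z) * (if G.InClosed W Z then G.acyclicSum Z else 0) = 0 := by
  rw [← sum_powerset_sdiff]
  calc _ = ∑ U ∈ W.powerset, ∑ S ∈ (G.inducedEdges W).powerset,
        if ∀ e ∈ S, (G e).2 ∈ W \ U then (-1) ^ #U * G.alpha S else 0 := by
          refine sum_congr rfl fun U hU => ?_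
          rw [Finset.sdiff_sdiff_eq_self (mem_powerset.1 hU), ← sum_alpha_heads_mem sdiff_subset,
            sum_filter, mul_sum]
          simp only [mul_ite, mul_zero]
    _ = ∑ S ∈ (G.inducedEdges W).powerset,
        G.alpha S * ∑ U ∈ (W.filter fun w => ∀ e ∈ S, (G e).2 ≠ w).powerset, (-1) ^ #U := by
          rw [sum_comm]
          refine sum_congr rfl fun S hS => ?_
          have hSW := mem_powerset.1 hS
          have hsources : W.powerset.filter (fun U => ∀ e ∈ S, (G e).2 ∈ W \ U) =
              (W.filter fun w => ∀ e ∈ S, (G e).2 ≠ w).powerset := by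
            ext U
            simp only [mem_filter, mem_powerset, mem_sdiff, subset_iff]
            have : ∀ e ∈ S, (G e).2 ∈ W := fun e he => (mem_inducedEdges.1 (hSW he)).2
            grind
          rw [← sum_filter, hsources, mul_sum]
          simp only [mul_comm]
    _ = 0 := by
          refine sum_eq_zero fun S hS => ?_
          by_cases hac : G.Acyclic S
          · obtain ⟨w, hw, hsrc⟩ := hac.exists_source (mem_powerset.1 hS) hW
            rw [sum_powerset_neg_one_pow_card_of_nonempty ⟨w, mem_filter.2 ⟨hw, hsrc⟩⟩, mul_zero]
          · simp [alpha, hac]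

def Reach (G : DG n k) (W : Finset (Fin n)) : Fin n → Fin n → Prop :=
  ReflTransGen (G.step (G.inducedEdges W))

lemma Reach.mono (h : W ⊆ Z) (hxy : G.Reach W x y) : G.Reach Z x y :=
  ReflTransGen.mono (fun _ _ => step_mono (inducedEdges_mono h)) _ _ hxy

lemma Reach.of_inClosed (hZ : G.InClosed W Z) (hxy : G.Reach W x y) (hy : y ∈ Z) :
    x ∈ Z ∧ G.Reach Z x y := by
  induction hxy with
  | refl => exact ⟨hy, .refl⟩
  | @tail b c _ hbc ih =>
    obtain ⟨e, he, hG⟩ := hbc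
    have hb : b ∈ Z := by simpa [hG] using hZ e he (by simpa [hG] using hy)
    exact ⟨(ih hb).1, (ih hb).2.tail ⟨e, by simp [hG, hb, hy], hG⟩⟩

lemma Reach.eqvGen_adj (hxy : G.Reach W x y) :
    EqvGen (G.adj (G.inducedEdges W)) x y := by
  induction hxy with
  | refl => exact .refl _
  | tail _ hbc ih =>
    obtain ⟨e, he, hG⟩ := hbc
    exact ih.trans _ _ _ (.rel _ _ ⟨e, he, .inl hG⟩)

def strongComp (G : DG n k) (W : Finset (Fin n)) (x : Fin n) : Finset (Fin n) :=
  W.filter fun y => G.Reach W x y ∧ G.Reach W y x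

lemma mem_strongComp : y ∈ G.strongComp W x ↔ y ∈ W ∧ G.Reach W x y ∧ G.Reach W y x :=
  mem_filter

lemma self_mem_strongComp (hx : x ∈ W) : x ∈ G.strongComp W x :=
  mem_strongComp.2 ⟨hx, .refl, .refl⟩

lemma strongComp_eq_of_mem (hy : y ∈ G.strongComp W x) : G.strongComp W y = G.strongComp W x := by
  obtain ⟨-, hxy, hyx⟩ := mem_strongComp.1 hy
  ext z
  simp only [mem_strongComp]
  exact ⟨fun ⟨hz, hyz, hzy⟩ => ⟨hz, hxy.trans hyz, hzy.trans hyx⟩,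
    fun ⟨hz, hxz, hzx⟩ => ⟨hz, hyx.trans hxz, hzx.trans hxy⟩⟩

lemma strongComp_subset_of_inClosed (hZ : G.InClosed W Z) (hx : x ∈ Z) :
    G.strongComp W x ⊆ Z :=
  fun _ hy => ((mem_strongComp.1 hy).2.2.of_inClosed hZ hx).1

def sourceComps (G : DG n k) (W : Finset (Fin n)) : Finset (Finset (Fin n)) :=
  (W.image (G.strongComp W)).filter (G.InClosed W)

lemma sourceComps_nonempty (hW : W.Nonempty) : (G.sourceComps W).Nonempty := by
  -- the strong component of a vertex with the fewest ancestors is a source component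
  obtain ⟨w, hw, hmin⟩ := exists_min_image W (fun w => #(W.filter (G.Reach W · w))) hW
  refine ⟨_, mem_filter.2 ⟨mem_image_of_mem _ hw, fun e he hhead => ?_⟩⟩
  obtain ⟨-, hwy, hyw⟩ := mem_strongComp.1 hhead
  have htw : G.Reach W (G e).1 w := (ReflTransGen.single ⟨e, he, rfl⟩).trans hyw
  have hsub : W.filter (G.Reach W · (G e).1) ⊆ W.filter (G.Reach W · w) := fun x hx => by
    rw [mem_filter] at hx ⊢
    exact ⟨hx.1, hx.2.trans htw⟩
  have hwt : w ∈ W.filter (G.Reach W · (G e).1) := by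
    rw [eq_of_subset_of_card_le hsub (hmin _ (mem_inducedEdges.1 he).1)]
    exact mem_filter.2 ⟨hw, .refl⟩
  exact mem_strongComp.2 ⟨(mem_inducedEdges.1 he).1, (mem_filter.1 hwt).2, htw⟩

variable {T : Finset (Finset (Fin n))}

lemma mem_biUnion_sourceComps (hT : T ⊆ G.sourceComps W) :
    x ∈ T.biUnion id ↔ x ∈ W ∧ G.strongComp W x ∈ T := by
  constructor
  · intro hx
    obtain ⟨C, hC, hxC⟩ := mem_biUnion.1 hx
    obtain ⟨w, -, rfl⟩ := mem_image.1 (mem_filter.1 (hT hC)).1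
    exact ⟨(mem_strongComp.1 hxC).1, by rwa [strongComp_eq_of_mem hxC]⟩
  · rintro ⟨hx, hC⟩
    exact mem_biUnion.2 ⟨_, hC, self_mem_strongComp hx⟩

lemma biUnion_sourceComps_subset (hT : T ⊆ G.sourceComps W) : T.biUnion id ⊆ W :=
  fun _ hx => ((mem_biUnion_sourceComps hT).1 hx).1

lemma tail_mem_strongComp_head (hT : T ⊆ G.sourceComps W) {e : Fin k}
    (he : e ∈ G.inducedEdges W) (hhead : (G e).2 ∈ T.biUnion id) :
    (G e).1 ∈ G.strongComp W (G e).2 :=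
  (mem_filter.1 (hT ((mem_biUnion_sourceComps hT).1 hhead).2)).2 e he
    (self_mem_strongComp (mem_inducedEdges.1 he).2)

lemma inClosed_biUnion_sourceComps (hT : T ⊆ G.sourceComps W) :
    G.InClosed W (T.biUnion id) := fun _ he hhead =>
  mem_biUnion.2 ⟨_, ((mem_biUnion_sourceComps hT).1 hhead).2, tail_mem_strongComp_head hT he hhead⟩

lemma ssc_biUnion_sourceComps (hT : T ⊆ G.sourceComps W) :
    G.SSC (G.inducedEdges (T.biUnion id)) := fun e he => by
  have heW := inducedEdges_mono (biUnion_sourceComps_subset hT) he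
  have hback := (mem_strongComp.1 (tail_mem_strongComp_head hT heW (mem_inducedEdges.1 he).2)).2.1
  exact (hback.of_inClosed (inClosed_biUnion_sourceComps hT) (mem_inducedEdges.1 he).1).2

lemma image_strongComp_biUnion_sourceComps (hT : T ⊆ G.sourceComps W) :
    (T.biUnion id).image (G.strongComp W) = T := by
  ext C
  constructor
  · intro hC
    obtain ⟨x, hx, rfl⟩ := mem_image.1 hC
    exact ((mem_biUnion_sourceComps hT).1 hx).2
  · intro hC
    obtain ⟨w, hw, rfl⟩ := mem_image.1 (mem_filter.1 (hT hC)).1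
    exact mem_image.2 ⟨w, (mem_biUnion_sourceComps hT).2 ⟨hw, hC⟩, rfl⟩

lemma beta0_biUnion_sourceComps (hT : T ⊆ G.sourceComps W) :
    G.beta0 (G.inducedEdges (T.biUnion id)) = n - #(T.biUnion id) + #T := by
  set Z := T.biUnion id
  -- the components of `G[Z]` are the strong components in `T` and the points outside `Z`
  let p : Fin n → Fin n ⊕ Finset (Fin n) :=
    fun x => if x ∈ Z then .inr (G.strongComp W x) else .inl x
  have hstep : ∀ a b, G.step (G.inducedEdges Z) a b → a ∈ Z ∧ b ∈ Z ∧
      G.strongComp W a = G.strongComp W b := by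
    rintro a b ⟨e, he, hG⟩
    have hab := mem_inducedEdges.1 he
    have htail := tail_mem_strongComp_head hT
      (inducedEdges_mono (biUnion_sourceComps_subset hT) he) hab.2
    rw [hG] at hab htail
    exact ⟨hab.1, hab.2, strongComp_eq_of_mem htail⟩
  have h₁ : ∀ a b, G.adj (G.inducedEdges Z) a b → p a = p b := by
    rintro a b ⟨e, he, hG | hG⟩
    · obtain ⟨ha, hb, hC⟩ := hstep a b ⟨e, he, hG⟩
      simp [p, ha, hb, hC]
    · obtain ⟨hb, ha, hC⟩ := hstep b a ⟨e, he, hG⟩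
      simp [p, ha, hb, hC]
  have h₂ : ∀ a b, p a = p b → EqvGen (G.adj (G.inducedEdges Z)) a b := by
    intro a b hab
    by_cases ha : a ∈ Z <;> by_cases hb : b ∈ Z <;> simp only [p, ha, hb, if_true, if_false,
      reduceCtorEq, Sum.inl.injEq, Sum.inr.injEq] at hab
    · have hba : b ∈ G.strongComp W a :=
        hab ▸ self_mem_strongComp (biUnion_sourceComps_subset hT hb)
      exact ((mem_strongComp.1 hba).2.1.of_inClosed (inClosed_biUnion_sourceComps hT)
        hb).2.eqvGen_adj
    · exact hab ▸ .refl _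
  have himage : univ.image p = T.image .inr ∪ Zᶜ.image .inl := by
    rw [← union_compl Z, image_union, ← image_strongComp_biUnion_sourceComps hT, image_image]
    congr 1 <;> refine image_congr fun x hx => ?_ <;> simp_all [p]
  rw [beta0, Nat.card_quot_eq_card_image _ p h₁ h₂, himage,
    card_union_of_disjoint (disjoint_left.2 (by simp)),
    card_image_of_injective _ Sum.inr_injective, card_image_of_injective _ Sum.inl_injective,
    card_compl, Fintype.card_fin, add_comm]

lemma image_strongComp_subset_sourceComps (hZW : Z ⊆ W) (hZ : G.InClosed W Z)
    (hssc : G.SSC (G.inducedEdges Z)) : Z.image (G.strongComp W) ⊆ G.sourceComps W := by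
  intro C hC
  obtain ⟨z, hz, rfl⟩ := mem_image.1 hC
  refine mem_filter.2 ⟨mem_image_of_mem _ (hZW hz), fun e he hhead => ?_⟩
  -- an edge entering the strong component of `z` is an edge of `G[Z]`, hence lies on a cycle
  obtain ⟨-, hzy, hyz⟩ := mem_strongComp.1 hhead
  have hheadZ := strongComp_subset_of_inClosed hZ hz hhead
  have hback : G.Reach W (G e).2 (G e).1 :=
    Reach.mono hZW (hssc e (mem_inducedEdges.2 ⟨hZ e he hheadZ, hheadZ⟩))
  exact mem_strongComp.2
    ⟨(mem_inducedEdges.1 he).1, hzy.trans hback, (ReflTransGen.single ⟨e, he, rfl⟩).trans hyz⟩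

lemma biUnion_image_strongComp (hZW : Z ⊆ W) (hZ : G.InClosed W Z) :
    (Z.image (G.strongComp W)).biUnion id = Z := by
  ext x
  simp only [mem_biUnion, mem_image, id]
  constructor
  · rintro ⟨_, ⟨z, hz, rfl⟩, hx⟩
    exact strongComp_subset_of_inClosed hZ hz hx
  · intro hx
    exact ⟨_, ⟨x, hx, rfl⟩, self_mem_strongComp (hZW hx)⟩

lemma filter_inClosed_ssc_eq_image_biUnion :
    W.powerset.filter (fun Z => G.InClosed W Z ∧ G.SSC (G.inducedEdges Z)) =
      (G.sourceComps W).powerset.image (·.biUnion id) := by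
  ext Z
  simp only [mem_filter, mem_powerset, mem_image]
  constructor
  · rintro ⟨hZW, hZ, hssc⟩
    exact ⟨_, image_strongComp_subset_sourceComps hZW hZ hssc, biUnion_image_strongComp hZW hZ⟩
  · rintro ⟨T, hT, rfl⟩
    exact ⟨biUnion_sourceComps_subset hT, inClosed_biUnion_sourceComps hT,
      ssc_biUnion_sourceComps hT⟩

def sscSign (G : DG n k) (W : Finset (Fin n)) : ℤ :=
  if G.SSC (G.inducedEdges W) then (-1) ^ (n + G.beta0 (G.inducedEdges W)) else 0

lemma sum_inClosed_sscSign (hW : W.Nonempty) :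
    ∑ Z ∈ W.powerset, (-1) ^ #(W \ Z) * (if G.InClosed W Z then G.sscSign Z else 0) = 0 := by
  have hinj : Set.InjOn (fun T : Finset (Finset (Fin n)) => T.biUnion id)
      ↑(G.sourceComps W).powerset := fun T₁ hT₁ T₂ hT₂ h => by
    rw [← image_strongComp_biUnion_sourceComps (mem_powerset.1 hT₁),
      ← image_strongComp_biUnion_sourceComps (mem_powerset.1 hT₂)]
    exact congrArg _ h
  calc _ = ∑ Z ∈ W.powerset with G.InClosed W Z ∧ G.SSC (G.inducedEdges Z),
        (-1) ^ #(W \ Z) * (-1) ^ (n + G.beta0 (G.inducedEdges Z)) := by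
          rw [sum_filter]
          refine sum_congr rfl fun Z _ => ?_
          by_cases hZ : G.InClosed W Z <;> by_cases hssc : G.SSC (G.inducedEdges Z) <;>
            simp [sscSign, hZ, hssc]
    _ = ∑ T ∈ (G.sourceComps W).powerset, (-1) ^ #W * (-1) ^ #T := by
          rw [filter_inClosed_ssc_eq_image_biUnion, sum_image hinj]
          refine sum_congr rfl fun T hT => ?_
          have hT := mem_powerset.1 hT
          have hcardW := card_le_card (biUnion_sourceComps_subset hT)
          have hcardn := card_le_univ (T.biUnion id)
          rw [beta0_biUnion_sourceComps hT, card_sdiff_of_subset (biUnion_sourceComps_subset hT),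
            ← pow_add, ← pow_add]
          refine neg_one_pow_congr ?_
          simp only [Nat.even_iff, Fintype.card_fin] at hcardn ⊢
          omega
    _ = 0 := by
          rw [← mul_sum, sum_powerset_neg_one_pow_card_of_nonempty (sourceComps_nonempty hW),
            mul_zero]

lemma acyclicSum_empty : G.acyclicSum ∅ = 1 := by
  have hE : G.inducedEdges ∅ = ∅ := by
    ext
    simp
  have hac : G.Acyclic ∅ := fun a ha => by
    obtain ⟨b, -, e, he, -⟩ := TransGen.tail'_iff.1 ha
    exact notMem_empty e he
  simp [acyclicSum, hE, alpha, hac]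

lemma sscSign_empty : G.sscSign ∅ = 1 := by
  have hβ : G.beta0 (G.inducedEdges ∅) = n := by
    simpa using beta0_biUnion_sourceComps (G := G) (W := ∅) (empty_subset _)
  have hssc : G.SSC (G.inducedEdges ∅) := fun e he => by simp at he
  rw [sscSign, if_pos hssc, hβ, ← two_mul, pow_mul]
  simp

theorem acyclicSum_eq_sscSign (W : Finset (Fin n)) : G.acyclicSum W = G.sscSign W := by
  induction W using Finset.strongInduction with
  | H W ih =>
  rcases W.eq_empty_or_nonempty with rfl | hW
  · rw [acyclicSum_empty, sscSign_empty]
  have hrec := (sum_inClosed_acyclicSum (G := G) hW).trans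
    (sum_inClosed_sscSign (G := G) hW).symm
  rw [← add_sum_erase _ _ (mem_powerset_self W), ← add_sum_erase _ _ (mem_powerset_self W),
    sum_congr rfl fun Z hZ => by
      rw [ih Z (ssubset_of_subset_of_ne (mem_powerset.1 (mem_of_mem_erase hZ))
        (ne_of_mem_erase hZ))]] at hrec
  have hW : G.InClosed W W := fun e he _ => (mem_inducedEdges.1 he).1
  simp only [Finset.sdiff_self, card_empty, pow_zero, one_mul, if_pos hW] at hrec
  exact add_right_cancel hrec

end DG

theorem sum_alpha_eq_sigma_general (n k : ℕ) (G : DG n k) :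
    ∑ S : Finset (Fin k), DG.alpha G S = (-1) ^ k * DG.sigma G Finset.univ := by
  have h := G.acyclicSum_eq_sscSign univ
  rw [DG.acyclicSum, DG.inducedEdges_univ, powerset_univ] at h
  rw [h, DG.sscSign, DG.sigma, DG.inducedEdges_univ, card_univ, Fintype.card_fin]
  split_ifs
  · rw [← pow_add]
    exact neg_one_pow_congr (by simp only [Nat.even_add]; tauto)
  · simp

/-- For every directed graph `G` with `n` labeled vertices and `k`
labeled edges, `∑_{H ⊆ G} α(H) = (−1)^k · σ(G)`. -/
theorem sum_alpha_eq_sigma (n k : ℕ) (hn : 1 ≤ n) (G : DG n k) :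
    ∑ S : Finset (Fin k), DG.alpha G S = (-1) ^ k * DG.sigma G Finset.univ :=
  sum_alpha_eq_sigma_general n k G
end
end

section
/- For every directed graph G with n labeled vertices and k labeled edges, the sum of σ(H) over all 2^k subgraphs H of G equals (−1)^k · α(G). -/
open Finset

open scoped Classical Nat

noncomputable section

/-!
Write `D(U) = ∑_{S ⊆ U} α(S)`. The heart of the matter is `D(U) = (-1)^|U| σ(U)`; the theorem
follows from it by Möbius inversion on the boolean lattice of edge sets.

If some edge `e` of `U` lies on no cycle of `U`, adding or removing `e` preserves acyclicity, so
`D(U) = 0`. If `U` is strongly semiconnected and nonempty, every acyclic `S ⊆ U` has a sink among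
the non-isolated vertices `V`, hence `α(S) = -∑ (-1)^|B| α(S)` over the nonempty sets `B ⊆ V` of
sinks of `S`. Exchanging the sums expresses `D(U)` through `D` of the proper subgraphs obtained by
deleting the out-edges of `B`. By induction such a term vanishes unless `B` is a union of
components, and then deleting the out-edges of `B` just isolates its vertices, so the signs collapse
to an alternating sum over the nonempty sets of components.
-/

namespace Relation.ReflTransGen

variable {α : Type*} {r r' : α → α → Prop} {p : α → Prop} {a b : α}

theorem of_invariant (h : ∀ ⦃c d⦄, r c d → p c → p d ∧ r' c d) (hab : ReflTransGen r a b)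
    (ha : p a) : ReflTransGen r' a b ∧ p b := by
  induction hab with
  | refl => exact ⟨.refl, ha⟩
  | tail _ hcd ih => exact ⟨ih.1.tail (h hcd ih.2).2, (h hcd ih.2).1⟩

end Relation.ReflTransGen

namespace Finset

theorem card_image_eq_card_image {α β γ : Type*} [DecidableEq α] [DecidableEq β] [DecidableEq γ]
    {s : Finset α} {f : α → β} {g : α → γ} (h : ∀ x ∈ s, ∀ y ∈ s, f x = f y ↔ g x = g y) :
    #(s.image f) = #(s.image g) := by
  induction s using Finset.induction_on with
  | empty => simp
  | insert a s ha ih =>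
    have hs : ∀ x ∈ s, ∀ y ∈ s, f x = f y ↔ g x = g y := fun x hx y hy =>
      h x (mem_insert_of_mem hx) y (mem_insert_of_mem hy)
    have hmem : f a ∈ s.image f ↔ g a ∈ s.image g := by
      simp only [mem_image]
      exact exists_congr fun y => and_congr_right fun hy =>
        (h y (mem_insert_of_mem hy) a (mem_insert_self a s))
    rw [image_insert, image_insert, card_insert_eq_ite, card_insert_eq_ite, ih hs]
    simp only [hmem]

theorem card_image_univ_of_disjoint {α β : Type*} [Fintype α] [DecidableEq α] [DecidableEq β]
    (s : Finset α) (g : α → β) (h : Disjoint (s.image g) (sᶜ.image g)) :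
    #(univ.image g) = #(s.image g) + #(sᶜ.image g) := by
  rw [← card_union_of_disjoint h, ← image_union, union_compl]

theorem sum_powerset_erase_empty_neg_one_pow {α : Type*} [DecidableEq α] {s : Finset α}
    (hs : s.Nonempty) : ∑ t ∈ s.powerset.erase ∅, (-1 : ℤ) ^ #t = -1 := by
  rw [sum_erase_eq_sub (empty_mem_powerset s), sum_powerset_neg_one_pow_card_of_nonempty hs]
  simp

theorem sum_powerset_neg_one_pow_card_mul_sum_powerset {α R : Type*} [DecidableEq α] [CommRing R]
    (f : Finset α → R) (s : Finset α) :
    ∑ t ∈ s.powerset, (-1) ^ #t * ∑ u ∈ t.powerset, f u = (-1) ^ #s * f s := by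
  induction s using Finset.induction_on generalizing f with
  | empty => simp
  | insert a s ha ih =>
    have hsplit : ∀ t ∈ s.powerset, (-1) ^ #t * ∑ u ∈ t.powerset, f u
        + (-1) ^ #(insert a t) * ∑ u ∈ (insert a t).powerset, f u
        = -((-1) ^ #t * ∑ u ∈ t.powerset, f (insert a u)) := by
      intro t ht
      have hat : a ∉ t := fun h => ha (mem_powerset.1 ht h)
      rw [card_insert_of_notMem hat, sum_powerset_insert hat, pow_succ]
      ring
    rw [sum_powerset_insert ha, ← sum_add_distrib, sum_congr rfl hsplit, sum_neg_distrib,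
      ih, card_insert_of_notMem ha, pow_succ]
    ring

end Finset

namespace DG

open Relation

variable {n k : ℕ} {G : DG n k} {S T U : Finset (Fin k)} {B : Finset (Fin n)} {e : Fin k}
  {a b x y : Fin n}

theorem step_mono_s1 (h : S ⊆ T) (hab : step G S a b) : step G T a b :=
  let ⟨f, hf, hGf⟩ := hab
  ⟨f, h hf, hGf⟩

theorem Acyclic.mono (h : S ⊆ T) (hT : Acyclic G T) : Acyclic G S := fun a ha =>
  hT a (TransGen.mono (fun _ _ => step_mono_s1 h) _ _ ha)

theorem step_insert : step G (insert e S) a b ↔ step G S a b ∨ G e = (a, b) := by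
  simp only [step, mem_insert, exists_eq_or_imp]
  exact or_comm

theorem transGen_insert (h : TransGen (step G (insert e S)) a b) :
    TransGen (step G S) a b ∨
      ReflTransGen (step G (insert e S)) a (G e).1 ∧
        ReflTransGen (step G (insert e S)) (G e).2 b := by
  induction h with
  | single hab =>
    rcases step_insert.1 hab with hab | hGe
    · exact .inl (.single hab)
    · exact .inr ⟨by rw [hGe], by rw [hGe]⟩
  | tail _ hcb ih =>
    rcases step_insert.1 hcb with hcb' | hGe
    · exact ih.imp (·.tail hcb') fun h => ⟨h.1, h.2.tail hcb⟩
    · refine .inr ⟨?_, by rw [hGe]⟩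
      rcases ih with h | h
      · rw [hGe]
        exact (TransGen.mono (fun _ _ => step_mono_s1 (subset_insert e S)) _ _ h).to_reflTransGen
      · exact h.1

theorem acyclic_insert (hc : ¬ OnCycle G U e) (hS : insert e S ⊆ U) (hA : Acyclic G S) :
    Acyclic G (insert e S) := by
  intro a ha
  rcases transGen_insert ha with h | ⟨h₁, h₂⟩
  · exact hA a h
  · exact hc (ReflTransGen.mono (fun _ _ => step_mono_s1 hS) _ _ (h₂.trans h₁))

theorem alpha_insert_s1 (hc : ¬ OnCycle G U e) (hS : insert e S ⊆ U) (heS : e ∉ S) :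
    alpha G (insert e S) = -alpha G S := by
  by_cases hA : Acyclic G S
  · rw [alpha, alpha, if_pos hA, if_pos (acyclic_insert hc hS hA), card_insert_of_notMem heS,
      pow_succ, mul_neg_one]
  · rw [alpha, alpha, if_neg hA, if_neg fun h => hA (h.mono (subset_insert e S)), neg_zero]

/-- Toggling an edge that lies on no cycle of `U` is a sign-reversing involution. -/
theorem sum_powerset_alpha_eq_zero_of_not_onCycle (he : e ∈ U) (hc : ¬ OnCycle G U e) :
    ∑ S ∈ U.powerset, alpha G S = 0 := by
  rw [← insert_erase he, sum_powerset_insert (notMem_erase e U), ← sum_add_distrib]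
  refine sum_eq_zero fun S hS => ?_
  have hSU : S ⊆ U.erase e := mem_powerset.1 hS
  rw [alpha_insert_s1 hc (insert_subset he (hSU.trans (erase_subset e U)))
    fun h => notMem_erase e U (hSU h), add_neg_cancel]

def nonIsolated (G : DG n k) (U : Finset (Fin k)) : Finset (Fin n) :=
  univ.filter fun x => ∃ f ∈ U, (G f).1 = x ∨ (G f).2 = x

theorem snd_mem_nonIsolated {f : Fin k} (hf : f ∈ U) : (G f).2 ∈ nonIsolated G U :=
  mem_filter.2 ⟨mem_univ _, f, hf, .inr rfl⟩

theorem nonIsolated_nonempty (hU : U.Nonempty) : (nonIsolated G U).Nonempty :=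
  let ⟨f, hf⟩ := hU
  ⟨(G f).1, mem_filter.2 ⟨mem_univ _, f, hf, .inl rfl⟩⟩

theorem exists_sink (hS : S ⊆ U) (hA : Acyclic G S) (hU : (nonIsolated G U).Nonempty) :
    ∃ x ∈ nonIsolated G U, ∀ f ∈ S, (G f).1 ≠ x := by
  have : IsTrans (Fin n) (flip (TransGen (step G S))) := ⟨fun _ _ _ h₁ h₂ => h₂.trans h₁⟩
  have : Std.Irrefl (flip (TransGen (step G S))) := ⟨hA⟩
  obtain ⟨m, hm, hmin⟩ := (Finite.wellFounded_of_trans_of_irrefl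
    (flip (TransGen (step G S)))).has_min (nonIsolated G U : Set (Fin n)) hU
  refine ⟨m, hm, fun f hf hfm => ?_⟩
  exact hmin (G f).2 (snd_mem_nonIsolated (hS hf)) (.single ⟨f, hf, by rw [← hfm]⟩)

def deleteOutEdges (G : DG n k) (B : Finset (Fin n)) (U : Finset (Fin k)) : Finset (Fin k) :=
  U.filter fun f => (G f).1 ∉ B

theorem powerset_deleteOutEdges :
    (deleteOutEdges G B U).powerset = U.powerset.filter fun S => ∀ f ∈ S, (G f).1 ∉ B := by
  ext S
  simp only [deleteOutEdges, mem_powerset, mem_filter, subset_iff]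
  exact ⟨fun h => ⟨fun f hf => (h hf).1, fun f hf => (h hf).2⟩,
    fun h f hf => ⟨h.1 hf, h.2 f hf⟩⟩

/-- Each acyclic `S ⊆ U` has a sink in `nonIsolated G U`, so summing `(-1)^#B` over the nonempty
sets `B` of such sinks gives `-1`. -/
theorem sum_powerset_alpha_eq_sum_deleteOutEdges (hU : U.Nonempty) :
    ∑ S ∈ U.powerset, alpha G S = -∑ B ∈ (nonIsolated G U).powerset.erase ∅,
      (-1) ^ #B * ∑ S ∈ (deleteOutEdges G B U).powerset, alpha G S := by
  have hsinks : ∀ S ∈ U.powerset, Acyclic G S →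
      ∑ B ∈ (nonIsolated G U).powerset.erase ∅ with ∀ f ∈ S, (G f).1 ∉ B, (-1 : ℤ) ^ #B = -1 := by
    intro S hS hA
    obtain ⟨x, hx, hsink⟩ := exists_sink (mem_powerset.1 hS) hA (nonIsolated_nonempty hU)
    have hW : ((nonIsolated G U).filter fun x => ∀ f ∈ S, (G f).1 ≠ x).Nonempty :=
      ⟨x, mem_filter.2 ⟨hx, hsink⟩⟩
    refine (sum_congr ?_ fun _ _ => rfl).trans (sum_powerset_erase_empty_neg_one_pow hW)
    ext B
    simp only [mem_filter, mem_erase, mem_powerset, subset_iff]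
    exact ⟨fun ⟨⟨hne, hB⟩, h⟩ => ⟨hne, fun x hx => ⟨hB hx, fun f hf hfx => h f hf (hfx ▸ hx)⟩⟩,
      fun ⟨hne, h⟩ => ⟨⟨hne, fun x hx => (h hx).1⟩, fun f hf hfB => (h hfB).2 f hf rfl⟩⟩
  simp_rw [powerset_deleteOutEdges, sum_filter, mul_sum]
  rw [sum_comm, ← sum_neg_distrib]
  refine sum_congr rfl fun S hS => ?_
  by_cases hA : Acyclic G S
  · simp_rw [mul_ite, mul_zero]
    rw [← sum_filter, ← sum_mul, hsinks S hS hA, neg_one_mul, neg_neg]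
  · simp only [alpha, if_neg hA, ite_self, mul_zero, sum_const_zero, neg_zero]

theorem adj_symm (h : adj G U x y) : adj G U y x :=
  let ⟨f, hf, hGf⟩ := h
  ⟨f, hf, hGf.symm⟩

instance : Std.Symm (adj G U) := ⟨fun _ _ => adj_symm⟩

theorem adj_mono (h : S ⊆ T) (hxy : adj G S x y) : adj G T x y :=
  let ⟨f, hf, hGf⟩ := hxy
  ⟨f, h hf, hGf⟩

theorem mk_eq_mk_iff :
    Quot.mk (adj G U) x = Quot.mk (adj G U) y ↔ ReflTransGen (adj G U) x y := by
  rw [← EqvGen.eqvGen_eq_reflTransGen]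
  exact ⟨Quot.eqvGen_exact, Quot.eqvGen_sound⟩

theorem mem_nonIsolated_of_adj (h : adj G U x y) : y ∈ nonIsolated G U :=
  let ⟨f, hf, hGf⟩ := h
  mem_filter.2 ⟨mem_univ _, f, hf, hGf.symm.imp (by rw [·]) (by rw [·])⟩

theorem SSC.reflTransGen_of_adj (hU : SSC G U) (h : adj G U x y) :
    ReflTransGen (step G U) x y := by
  obtain ⟨f, hf, hGf | hGf⟩ := h
  · exact .single ⟨f, hf, hGf⟩
  · simpa only [OnCycle, hGf] using hU f hf

theorem SSC.exists_out_edge (hU : SSC G U) (hx : x ∈ nonIsolated G U) :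
    ∃ f ∈ U, (G f).1 = x := by
  obtain ⟨-, f, hf, hx | hx⟩ := mem_filter.1 hx
  · exact ⟨f, hf, hx⟩
  · rcases (hU f hf).cases_head with h | ⟨c, ⟨g, hg, hGg⟩, -⟩
    · exact ⟨f, hf, h ▸ hx⟩
    · exact ⟨g, hg, by rw [hGg, ← hx]⟩

theorem deleteOutEdges_ssubset (hU : SSC G U) (hB : B ⊆ nonIsolated G U) (hne : B.Nonempty) :
    deleteOutEdges G B U ⊂ U := by
  obtain ⟨b, hb⟩ := hne
  obtain ⟨f, hf, hfb⟩ := hU.exists_out_edge (hB hb)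
  refine ssubset_of_subset_of_ne (filter_subset _ _) fun h => ?_
  rw [← h] at hf
  exact (mem_filter.1 hf).2 (hfb ▸ hb)

def AdjClosed (G : DG n k) (U : Finset (Fin k)) (B : Finset (Fin n)) : Prop :=
  ∀ ⦃x y⦄, adj G U x y → x ∈ B → y ∈ B

theorem AdjClosed.mem_of_mk_eq (hB : AdjClosed G U B)
    (h : Quot.mk (adj G U) x = Quot.mk (adj G U) y) (hx : x ∈ B) : y ∈ B :=
  (ReflTransGen.of_invariant (r' := adj G U) (fun _ _ hcd hc => ⟨hB hcd hc, hcd⟩)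
    (mk_eq_mk_iff.1 h) hx).2

theorem AdjClosed.reflTransGen_deleteOutEdges (hB : AdjClosed G U B)
    (h : ReflTransGen (step G U) a b) (ha : a ∉ B) :
    ReflTransGen (step G (deleteOutEdges G B U)) a b := by
  refine (ReflTransGen.of_invariant (p := (· ∉ B)) ?_ h ha).1
  rintro c d ⟨f, hf, hGf⟩ hc
  exact ⟨fun hd => hc (hB ⟨f, hf, .inr hGf⟩ hd), f, mem_filter.2 ⟨hf, by rwa [hGf]⟩, hGf⟩

theorem ssc_deleteOutEdges_iff (hU : SSC G U) :
    SSC G (deleteOutEdges G B U) ↔ AdjClosed G U B := by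
  constructor
  · intro hD x y hxy hx
    by_contra hy
    have hstep : ∀ ⦃c d⦄, step G U c d → c ∉ B → d ∉ B ∧ step G U c d := by
      rintro c d ⟨f, hf, hGf⟩ hc
      refine ⟨fun hd => hc ?_, f, hf, hGf⟩
      have hfD : f ∈ deleteOutEdges G B U := mem_filter.2 ⟨hf, by rwa [hGf]⟩
      rcases (hD f hfD).cases_head with h | ⟨c', ⟨g, hg, hGg⟩, -⟩
      · have hdc : d = c := by simpa only [hGf] using h
        exact hdc ▸ hd
      · exact ((mem_filter.1 hg).2 (by rw [hGg, hGf]; exact hd)).elim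
    exact (ReflTransGen.of_invariant hstep (hU.reflTransGen_of_adj (adj_symm hxy)) hy).2 hx
  · intro hB f hf
    have ⟨hfU, hf₁⟩ := mem_filter.1 hf
    exact hB.reflTransGen_deleteOutEdges (hU f hfU) fun h₂ =>
      hf₁ (hB (adj_symm ⟨f, hfU, .inl rfl⟩) h₂)

theorem beta0_eq_card_image (G : DG n k) (S : Finset (Fin k)) :
    beta0 G S = #(univ.image (Quot.mk (adj G S))) := by
  let _ : Fintype (Quot (adj G S)) := Fintype.ofSurjective _ Quot.mk_surjective
  rw [beta0, Nat.card_eq_fintype_card, ← card_univ, image_univ_of_surjective Quot.mk_surjective]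

theorem beta0_empty (G : DG n k) : beta0 G ∅ = n := by
  have hinj : Function.Injective (Quot.mk (adj G ∅)) := fun x y h => by
    rcases (mk_eq_mk_iff.1 h).cases_head with hxy | ⟨c, ⟨f, hf, -⟩, -⟩
    · exact hxy
    · exact absurd hf (notMem_empty f)
  rw [beta0_eq_card_image, card_image_of_injective _ hinj, card_univ, Fintype.card_fin]

/-- Deleting the out-edges of a union `B` of components isolates the vertices of `B` and leaves
the other components intact. -/
theorem AdjClosed.beta0_deleteOutEdges (hB : AdjClosed G U B) :
    beta0 G (deleteOutEdges G B U) + #(B.image (Quot.mk (adj G U))) = beta0 G U + #B := by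
  set D := deleteOutEdges G B U
  have hDU : D ⊆ U := filter_subset _ _
  have hD : ∀ ⦃x y⦄, adj G D x y → x ∉ B := by
    rintro x y ⟨f, hf, hGf | hGf⟩ hx
    · exact (mem_filter.1 hf).2 (by rw [hGf]; exact hx)
    · exact (mem_filter.1 hf).2 (by rw [hGf]; exact hB ⟨f, hDU hf, .inr hGf⟩ hx)
  have hmkB : ∀ ⦃x y⦄, x ∈ B → Quot.mk (adj G D) x = Quot.mk (adj G D) y → x = y := by
    intro x y hx h
    rcases (mk_eq_mk_iff.1 h).cases_head with hxy | ⟨c, hxc, -⟩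
    · exact hxy
    · exact absurd hx (hD hxc)
  have hmkBc : ∀ x ∈ Bᶜ, ∀ y ∈ Bᶜ,
      Quot.mk (adj G D) x = Quot.mk (adj G D) y ↔ Quot.mk (adj G U) x = Quot.mk (adj G U) y := by
    intro x hx y _
    rw [mk_eq_mk_iff, mk_eq_mk_iff]
    refine ⟨ReflTransGen.mono (fun _ _ => adj_mono hDU) _ _, fun h => ?_⟩
    refine (ReflTransGen.of_invariant (p := (· ∉ B)) ?_ h (mem_compl.1 hx)).1
    rintro c d ⟨f, hf, hGf⟩ hc
    have hd : d ∉ B := fun hd => hc (hB ⟨f, hf, hGf.symm⟩ hd)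
    refine ⟨hd, f, mem_filter.2 ⟨hf, ?_⟩, hGf⟩
    rcases hGf with hGf | hGf <;> rw [hGf] <;> assumption
  have hcardU := card_image_univ_of_disjoint B (Quot.mk (adj G U)) <|
    disjoint_left.2 fun q hq hq' => by
    obtain ⟨b, hb, rfl⟩ := mem_image.1 hq
    obtain ⟨x, hx, hxb⟩ := mem_image.1 hq'
    exact mem_compl.1 hx (hB.mem_of_mk_eq hxb.symm hb)
  have hcardD := card_image_univ_of_disjoint B (Quot.mk (adj G D)) <|
    disjoint_left.2 fun q hq hq' => by
    obtain ⟨b, hb, rfl⟩ := mem_image.1 hq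
    obtain ⟨x, hx, hxb⟩ := mem_image.1 hq'
    exact mem_compl.1 hx (hmkB hb hxb.symm ▸ hb)
  rw [card_image_of_injOn fun x hx y _ h => hmkB hx h, card_image_eq_card_image hmkBc] at hcardD
  rw [beta0_eq_card_image, beta0_eq_card_image, hcardD, hcardU]
  omega

theorem sum_adjClosed_eq_sum_components {M : Type*} [AddCommMonoid M]
    (h : Finset (Quot (adj G U)) → M) :
    ∑ B ∈ (nonIsolated G U).powerset.erase ∅ with AdjClosed G U B, h (B.image (Quot.mk _)) =
      ∑ J ∈ ((nonIsolated G U).image (Quot.mk (adj G U))).powerset.erase ∅, h J := by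
  refine sum_nbij' (fun B => B.image (Quot.mk _))
    (fun J => (nonIsolated G U).filter fun x => Quot.mk _ x ∈ J) ?_ ?_ ?_ ?_ fun _ _ => rfl
  · intro B hB
    simp only [mem_filter, mem_erase, mem_powerset, ne_eq, image_eq_empty] at hB ⊢
    exact ⟨hB.1.1, image_subset_image hB.1.2⟩
  · intro J hJ
    simp only [mem_filter, mem_erase, mem_powerset, ne_eq] at hJ ⊢
    refine ⟨⟨?_, filter_subset _ _⟩, fun x y hxy hx => ?_⟩
    · obtain ⟨q, hq⟩ := nonempty_iff_ne_empty.2 hJ.1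
      obtain ⟨x, hx, rfl⟩ := mem_image.1 (hJ.2 hq)
      exact nonempty_iff_ne_empty.1 ⟨x, mem_filter.2 ⟨hx, hq⟩⟩
    · exact mem_filter.2 ⟨mem_nonIsolated_of_adj hxy, Quot.sound hxy ▸ (mem_filter.1 hx).2⟩
  · intro B hB
    simp only [mem_filter, mem_erase, mem_powerset] at hB
    ext x
    simp only [mem_filter, mem_image]
    exact ⟨fun ⟨_, b, hb, hbx⟩ => hB.2.mem_of_mk_eq hbx hb, fun hx => ⟨hB.1.2 hx, x, hx, rfl⟩⟩
  · intro J hJ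
    simp only [mem_erase, mem_powerset] at hJ
    ext q
    simp only [mem_image, mem_filter]
    refine ⟨fun ⟨x, ⟨_, hx⟩, hxq⟩ => hxq ▸ hx, fun hq => ?_⟩
    obtain ⟨x, hx, rfl⟩ := mem_image.1 (hJ.2 hq)
    exact ⟨x, ⟨hx, hq⟩, rfl⟩

theorem sum_ssc_deleteOutEdges (hU : SSC G U) (hV : (nonIsolated G U).Nonempty) :
    ∑ B ∈ (nonIsolated G U).powerset.erase ∅, (-1) ^ #B *
      (if SSC G (deleteOutEdges G B U) then (-1) ^ (n + beta0 G (deleteOutEdges G B U)) else 0) =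
      -(-1) ^ (n + beta0 G U) := by
  calc _ = ∑ B ∈ (nonIsolated G U).powerset.erase ∅ with AdjClosed G U B,
        (-1) ^ (n + beta0 G U) * (-1) ^ #(B.image (Quot.mk (adj G U))) := by
        rw [sum_filter]
        refine sum_congr rfl fun B _ => ?_
        rw [ssc_deleteOutEdges_iff hU]
        split_ifs with hB
        · have := hB.beta0_deleteOutEdges
          rw [← pow_add, ← pow_add]
          exact neg_one_pow_congr (by simp only [Nat.even_iff]; omega)
        · rw [mul_zero]
    _ = ∑ J ∈ ((nonIsolated G U).image (Quot.mk (adj G U))).powerset.erase ∅,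
        (-1) ^ (n + beta0 G U) * (-1) ^ #J :=
        sum_adjClosed_eq_sum_components fun J => (-1) ^ (n + beta0 G U) * (-1) ^ #J
    _ = -(-1) ^ (n + beta0 G U) := by
        rw [← mul_sum, sum_powerset_erase_empty_neg_one_pow (hV.image _), mul_neg_one]

theorem sum_powerset_alpha (U : Finset (Fin k)) :
    ∑ S ∈ U.powerset, alpha G S = if SSC G U then (-1) ^ (n + beta0 G U) else 0 := by
  induction U using Finset.strongInduction with
  | H U ih =>
    by_cases hU : SSC G U
    · rw [if_pos hU]
      rcases U.eq_empty_or_nonempty with rfl | hne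
      · have hA : Acyclic G ∅ := fun a h => by
          obtain ⟨c, ⟨f, hf, -⟩, -⟩ := TransGen.head'_iff.1 h
          exact notMem_empty f hf
        rw [powerset_empty, sum_singleton, alpha, if_pos hA, beta0_empty, ← two_mul, pow_mul]
        simp
      · rw [sum_powerset_alpha_eq_sum_deleteOutEdges hne, neg_eq_iff_eq_neg,
          ← sum_ssc_deleteOutEdges hU (nonIsolated_nonempty hne)]
        refine sum_congr rfl fun B hB => ?_
        obtain ⟨hBne, hB⟩ := mem_erase.1 hB
        rw [ih _ (deleteOutEdges_ssubset hU (mem_powerset.1 hB) (nonempty_iff_ne_empty.2 hBne))]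
    · obtain ⟨e, he, hc⟩ : ∃ e ∈ U, ¬ OnCycle G U e := by simpa [SSC] using hU
      rw [if_neg hU, sum_powerset_alpha_eq_zero_of_not_onCycle he hc]

theorem sum_powerset_alpha_eq_neg_one_pow_mul_sigma (U : Finset (Fin k)) :
    ∑ S ∈ U.powerset, alpha G S = (-1) ^ #U * sigma G U := by
  rw [sum_powerset_alpha, sigma]
  split_ifs
  · rw [← pow_add]
    exact neg_one_pow_congr (by simp only [Nat.even_iff]; omega)
  · rw [mul_zero]

end DG

theorem sum_sigma_eq_alpha_general (n k : ℕ) (G : DG n k) :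
    ∑ S : Finset (Fin k), DG.sigma G S = (-1) ^ k * DG.alpha G Finset.univ := by
  have h := sum_powerset_neg_one_pow_card_mul_sum_powerset (DG.alpha G) univ
  simp_rw [DG.sum_powerset_alpha_eq_neg_one_pow_mul_sigma, ← mul_assoc, ← pow_add,
    Even.neg_one_pow (Even.add_self _), one_mul, powerset_univ, card_univ, Fintype.card_fin] at h
  exact h

/-- For every directed graph `G` with `n` labeled vertices and `k`
labeled edges, `∑_{H ⊆ G} σ(H) = (−1)^k · α(G)`. -/
theorem sum_sigma_eq_alpha (n k : ℕ) (hn : 1 ≤ n) (G : DG n k) :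
    ∑ S : Finset (Fin k), DG.sigma G S = (-1) ^ k * DG.alpha G Finset.univ :=
  sum_sigma_eq_alpha_general n k G
end
end

section
/- (Matrix-tree theorem for diagonal minors of arbitrary codimension.) Let R be a commutative ring, W = (w_{ij}) an n×n matrix over R, and Ŵ its Laplace matrix. Let I ⊆ {1,…,n} have s elements, with s ≤ n. Then (n−s)! · det(M) = (−1)^{n−s} · ∑_{G ∈ AC_{n,n−s}^I} ∏_{[ab]∈G} w_{ab}, where M is the (n−s)×(n−s) submatrix of Ŵ obtained by deleting the rows and columns with indices in I, and the sum is over all acyclic directed graphs with n labeled vertices and n−s labeled edges whose set of sinks is exactly I. (Such graphs are exactly the s-component forests in which each component contains exactly one vertex of I and all edges of that component are directed towards it.) -/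
open Finset

open scoped Classical Nat

noncomputable section

/-- `Graph_{n,k}`: the vector space over `R` with basis `Γ_{n,k}`. -/
abbrev GS (R : Type*) [Semiring R] (n k : ℕ) := DG n k →₀ R

namespace DG

variable {R : Type*}

/-- Action of the operator `B_p` on a basis graph `G`: identity if the `p`-th edge is not a
loop, and `−∑_{b ≠ a} R_{ab;p} G` if it is the loop `[aa]`. -/
noncomputable def Bsingle [CommRing R] (n k : ℕ) (p : Fin k) (G : DG n k) : GS R n k :=
  if (G p).1 = (G p).2 then
    - ∑ b ∈ Finset.univ.filter (fun b => b ≠ (G p).1),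
        Finsupp.single (Function.update G p ((G p).1, b)) (1 : R)
  else Finsupp.single G 1

/-- The linear operator `B_p : Graph_{n,k} → Graph_{n,k}`. -/
noncomputable def B [CommRing R] (n k : ℕ) (p : Fin k) : GS R n k →ₗ[R] GS R n k :=
  Finsupp.lsum R fun G => LinearMap.toSpanSingleton R (GS R n k) (Bsingle n k p G)

/-- The Laplace operator `Δ = B_1 ⋯ B_k` (identity when `k = 0`). -/
noncomputable def Laplace [CommRing R] (n k : ℕ) : GS R n k →ₗ[R] GS R n k :=
  (List.ofFn fun p : Fin k => B (R := R) n k p).prod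

/-- `U(𝔅) = ∑_{G ∈ 𝔅} G`. -/
noncomputable def U (R : Type*) [CommRing R] (n k : ℕ) (P : DG n k → Prop) : GS R n k :=
  ∑ G : DG n k, if P G then Finsupp.single G (1 : R) else 0

/-- `X(𝔅) = ∑_{G ∈ 𝔅} (−1)^{β₀(G)} G`. -/
noncomputable def X (R : Type*) [CommRing R] (n k : ℕ) (P : DG n k → Prop) : GS R n k :=
  ∑ G : DG n k, if P G then Finsupp.single G ((-1 : R) ^ beta0 G Finset.univ) else 0

/-- `SSC_{n,k}^I`: strongly semiconnected graphs whose set of isolated vertices is exactly `I`. -/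
def SSCset (n k : ℕ) (I : Finset (Fin n)) : DG n k → Prop :=
  fun G => SSC G Finset.univ ∧ {v | isolated G v} = (I : Set (Fin n))

/-- `AC_{n,k}^I`: acyclic graphs whose set of sinks is exactly `I`. -/
def ACset (n k : ℕ) (I : Finset (Fin n)) : DG n k → Prop :=
  fun G => Acyclic G Finset.univ ∧ {v | isSink G v} = (I : Set (Fin n))

/-- The universal diagonal `I`-minor `det_{n,k}^I = ((−1)^k / k!) · X(SSC_{n,k}^I)`. -/
noncomputable def detI (R : Type*) [Field R] (n k : ℕ) (I : Finset (Fin n)) : GS R n k :=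
  (((-1 : R) ^ k) / (k ! : R)) • X R n k (SSCset n k I)

/-- The universal `(i,j)`-minor
`det_{n,k}^{i/j} = ((−1)^k / k!) · X({G : ([ij])*G ∈ SSC_{n,k+1}^∅})`. -/
noncomputable def detIJ (R : Type*) [Field R] (n k : ℕ) (i j : Fin n) : GS R n k :=
  (((-1 : R) ^ k) / (k ! : R)) •
    X R n k (fun G => SSCset n (k + 1) (∅ : Finset (Fin n)) (Fin.cons (i, j) G))

/-- The pairing `⟨W | G⟩ = ∏_{[ij] ∈ G} w_{ij}`, extended linearly to `Graph_{n,k}`. -/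
noncomputable def pair [CommRing R] {n k : ℕ} (W : Matrix (Fin n) (Fin n) R)
    (x : GS R n k) : R :=
  x.sum fun G c => c * ∏ e : Fin k, W (G e).1 (G e).2

/-- The Laplace matrix `Ŵ` of `W`: off-diagonal entries `w_{ij}`, diagonal entries
`−∑_{j ≠ i} w_{ij}`. -/
def lapMat [CommRing R] {n : ℕ} (W : Matrix (Fin n) (Fin n) R) : Matrix (Fin n) (Fin n) R :=
  Matrix.of fun i j =>
    if i = j then - ∑ l ∈ Finset.univ.filter (fun l => l ≠ i), W i l else W i j

end DG

/-! Expanding each row of the minor as `∑_l w_{al} (e_l − e_a)` and using multilinearity, the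
determinant becomes a sum over maps `f` sending each vertex `a ∉ I` to some vertex `f a`, of
`∏_a w_{a, f a}` times `det (N_f − 1)`, where `N_f` is the adjacency matrix of the functional
graph of `f` on the vertices outside `I`. If that graph is acyclic, `N_f` is strictly upper
triangular in a linear extension, so `det (N_f − 1) = (−1)^{n−s}`; otherwise the rows indexed
by the vertices on cycles sum to zero. Finally, an acyclic graph with sink set exactly `I` and
`n − s` labeled edges is the same as such an acyclic `f` together with one of the `(n − s)!`
labellings of its edges. -/

namespace Matrix

variable {ι R : Type*} [Fintype ι] [DecidableEq ι] [CommRing R]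

theorem det_of_sum_rows {κ : Type*} [Fintype κ] (g : ι → κ → ι → R) :
    det (of fun a b => ∑ l, g a l b) = ∑ f : ι → κ, det (of fun a b => g a (f a) b) := by
  have hrows : (of fun a b => ∑ l, g a l b) = fun a => ∑ l, g a l := by
    ext a b
    simp [Finset.sum_apply]
  rw [hrows]
  exact (detRowAlternating (n := ι) (R := R)).map_sum g

theorem det_eq_zero_of_sum_rows_eq_zero (M : Matrix ι ι R) {C : Finset ι} {a : ι} (ha : a ∈ C)
    (hC : ∀ b, ∑ c ∈ C, M c b = 0) : M.det = 0 := by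
  have hrow : ∑ c, (if c ∈ C then (1 : R) else 0) • M c = 0 := by
    funext b
    simp only [Finset.sum_apply, ite_smul, one_smul, zero_smul, ite_apply, Pi.zero_apply]
    rw [Finset.sum_ite_mem, Finset.univ_inter]
    exact hC b
  have h := det_updateRow_sum M a fun c => if c ∈ C then 1 else 0
  rw [hrow, if_pos ha, one_smul] at h
  rw [← h]
  exact det_eq_zero_of_row_eq_zero a fun b => by simp

/-- Ordering `ι` lexicographically by depth in `r` makes `M` upper triangular. -/
theorem det_eq_prod_diag_of_acyclic {r : ι → ι → Prop} (hr : ∀ a, ¬ Relation.TransGen r a a)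
    {M : Matrix ι ι R} (hM : ∀ a b, a ≠ b → ¬ r a b → M a b = 0) : M.det = ∏ a, M a a := by
  let depth : ι → ℕ := fun a => #{x | Relation.ReflTransGen r x a}
  have depth_lt : ∀ a b, r a b → depth a < depth b := by
    intro a b hab
    refine Finset.card_lt_card ⟨fun x hx => ?_, fun hsub => ?_⟩
    · simp only [Finset.mem_filter, Finset.mem_univ, true_and] at hx ⊢
      exact hx.tail hab
    · have hb := hsub (Finset.mem_filter.mpr ⟨Finset.mem_univ b, .refl⟩)
      simp only [Finset.mem_filter, Finset.mem_univ, true_and] at hb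
      exact hr b (.tail' hb hab)
  let e := Fintype.equivFin ι
  let _ : LinearOrder ι := LinearOrder.lift' (fun a => toLex (depth a, e a)) fun a b h =>
    e.injective (congrArg (fun p => (ofLex p).2) h)
  refine det_of_isUpperTriangular fun a b hba => hM a b hba.ne' fun hab => ?_
  have hlex : toLex (depth b, e b) < toLex (depth a, e a) := hba
  have := depth_lt a b hab
  rw [Prod.Lex.toLex_lt_toLex] at hlex
  omega

def ofRel (r : ι → ι → Prop) : Matrix ι ι R :=
  of fun a b => if r a b then 1 else 0

theorem det_ofRel_sub_one_of_acyclic {r : ι → ι → Prop} (hr : ∀ a, ¬ Relation.TransGen r a a) :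
    (ofRel r - 1 : Matrix ι ι R).det = (-1) ^ Fintype.card ι := by
  rw [det_eq_prod_diag_of_acyclic hr fun a b hab hab' => by simp [ofRel, hab, hab']]
  have hloop : ∀ a, ¬ r a a := fun a h => hr a (.single h)
  simp [ofRel, hloop]

theorem det_ofRel_sub_one_of_cycle {r : ι → ι → Prop} (hfun : ∀ a b c, r a b → r a c → b = c)
    {a₀ : ι} (ha₀ : Relation.TransGen r a₀ a₀) : (ofRel r - 1 : Matrix ι ι R).det = 0 := by
  set C : Finset ι := {a | Relation.TransGen r a a}
  have mem_C : ∀ a, a ∈ C ↔ Relation.TransGen r a a := by simp [C]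
  have succ_mem : ∀ a ∈ C, ∀ b, r a b → b ∈ C := by
    intro a ha b hab
    obtain ⟨b', hab', hb'a⟩ := Relation.TransGen.head'_iff.mp ((mem_C a).mp ha)
    exact (mem_C b).mpr (.tail' (hfun a b' b hab' hab ▸ hb'a) hab)
  have exists_succ : ∀ a ∈ C, ∃ b, r a b := fun a ha =>
    let ⟨b, hab, _⟩ := Relation.TransGen.head'_iff.mp ((mem_C a).mp ha); ⟨b, hab⟩
  choose! σ hσ using exists_succ
  have maps : Set.MapsTo σ C C := fun a ha => succ_mem a ha _ (hσ a ha)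
  have surj : Set.SurjOn σ C C := by
    intro b hb
    obtain ⟨a, hba, hab⟩ := Relation.TransGen.tail'_iff.mp ((mem_C b).mp hb)
    have ha : a ∈ C := (mem_C a).mpr (.head' hab hba)
    exact ⟨a, ha, hfun a _ b (hσ a ha) hab⟩
  have inj : Set.InjOn σ C := Finset.injOn_of_surjOn_of_card_le σ maps surj le_rfl
  -- `σ` permutes the vertices on cycles, so the rows indexed by `C` sum to zero.
  refine det_eq_zero_of_sum_rows_eq_zero _ ((mem_C a₀).mpr ha₀) fun b => ?_
  have hcol : ∑ a ∈ C, (if r a b then (1 : R) else 0) = ∑ c ∈ C, if c = b then 1 else 0 :=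
    Finset.sum_nbij σ maps inj surj fun a ha =>
      if_congr ⟨fun hab => (hfun a _ b (hσ a ha) hab), fun h => h ▸ hσ a ha⟩ rfl rfl
  simp only [ofRel, sub_apply, of_apply, one_apply, Finset.sum_sub_distrib, hcol]
  simp

end Matrix

namespace DG

variable {R : Type*} [CommRing R] {n k : ℕ}

/-- A map `f : Subtype p → α` is read as a partial self-map of `Subtype p`, undefined where
`f` leaves the subtype; `funRel f` is its graph. -/
def funRel {α : Type*} {p : α → Prop} (f : Subtype p → α) (a b : Subtype p) : Prop :=
  f a = b

theorem lapMat_apply_eq_sum (W : Matrix (Fin n) (Fin n) R) (i j : Fin n) :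
    lapMat W i j = ∑ l, W i l * ((if l = j then 1 else 0) - if i = j then 1 else 0) := by
  by_cases hij : i = j
  · subst hij
    simp only [lapMat, Matrix.of_apply, if_true, mul_sub, mul_one, mul_ite, mul_zero,
      Finset.sum_sub_distrib, Finset.sum_ite_eq', Finset.mem_univ]
    rw [Finset.filter_ne', Finset.sum_erase_eq_sub (Finset.mem_univ i)]
    ring
  · simp [lapMat, hij]

theorem det_lapMat_minor (I : Finset (Fin n)) (W : Matrix (Fin n) (Fin n) R) :
    (Matrix.of fun a b : {x : Fin n // x ∉ I} => lapMat W a b).det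
      = (-1) ^ Fintype.card {x : Fin n // x ∉ I} *
          ∑ f : {x : Fin n // x ∉ I} → Fin n,
            if ∀ a, ¬ Relation.TransGen (funRel f) a a then ∏ a : {x : Fin n // x ∉ I}, W a (f a)
            else 0 := by
  have hminor : (Matrix.of fun a b : {x : Fin n // x ∉ I} => lapMat W a b)
      = Matrix.of fun a b : {x : Fin n // x ∉ I} => ∑ l, W a l *
          ((if l = b then 1 else 0) - (1 : Matrix {x : Fin n // x ∉ I} _ R) a b) := by
    ext a b
    simp [lapMat_apply_eq_sum, Matrix.one_apply, Subtype.ext_iff]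
  rw [hminor, Matrix.det_of_sum_rows, Finset.mul_sum]
  refine Finset.sum_congr rfl fun f _ => ?_
  have hrow : (Matrix.of fun a b : {x : Fin n // x ∉ I} => W a (f a) *
      ((if f a = b then 1 else 0) - (1 : Matrix {x : Fin n // x ∉ I} _ R) a b))
        = Matrix.of fun a b : {x : Fin n // x ∉ I} =>
            W a (f a) * (Matrix.ofRel (funRel f) - 1 : Matrix _ _ R) a b := by
    ext a b
    simp only [Matrix.of_apply, Matrix.sub_apply, Matrix.ofRel, funRel]
    congr
  rw [hrow, Matrix.det_mul_column]
  split_ifs with hf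
  · rw [Matrix.det_ofRel_sub_one_of_acyclic hf, mul_comm]
  · obtain ⟨a, ha⟩ := not_forall_not.mp hf
    rw [Matrix.det_ofRel_sub_one_of_cycle (fun a b c hb hc => Subtype.ext (hb.symm.trans hc)) ha,
      mul_zero, mul_zero]

variable {I : Finset (Fin n)}

def graphOf (π : Fin k ≃ {x : Fin n // x ∉ I}) (f : {x : Fin n // x ∉ I} → Fin n) : DG n k :=
  fun e => (π e, f (π e))

theorem step_graphOf_iff (π : Fin k ≃ {x : Fin n // x ∉ I}) (f : {x : Fin n // x ∉ I} → Fin n)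
    {x y : Fin n} : step (graphOf π f) univ x y ↔ ∃ hx : x ∉ I, f ⟨x, hx⟩ = y := by
  constructor
  · rintro ⟨e, -, he⟩
    simp only [graphOf, Prod.mk.injEq] at he
    obtain ⟨rfl, rfl⟩ := he
    exact ⟨(π e).2, rfl⟩
  · rintro ⟨hx, rfl⟩
    exact ⟨π.symm ⟨x, hx⟩, mem_univ _, by simp [graphOf]⟩

theorem isSink_graphOf_iff (π : Fin k ≃ {x : Fin n // x ∉ I}) (f : {x : Fin n // x ∉ I} → Fin n)
    {v : Fin n} : isSink (graphOf π f) v ↔ v ∈ I := by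
  constructor
  · intro h
    by_contra hv
    exact h (π.symm ⟨v, hv⟩) (by simp [graphOf])
  · intro hv e he
    have he' : ((π e : {x : Fin n // x ∉ I}) : Fin n) = v := he
    exact (π e).2 (he' ▸ hv)

theorem acyclic_graphOf_iff (π : Fin k ≃ {x : Fin n // x ∉ I}) (f : {x : Fin n // x ∉ I} → Fin n) :
    Acyclic (graphOf π f) univ ↔ ∀ a, ¬ Relation.TransGen (funRel f) a a := by
  have restrict : ∀ x y, Relation.TransGen (step (graphOf π f) univ) x y →
      ∀ (hx : x ∉ I) (hy : y ∉ I), Relation.TransGen (funRel f) ⟨x, hx⟩ ⟨y, hy⟩ := by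
    intro x y hxy
    induction hxy with
    | single h =>
      intro hx hy
      exact .single ((step_graphOf_iff π f).mp h).2
    | tail _ hbc ih =>
      intro hx hy
      obtain ⟨hb, h⟩ := (step_graphOf_iff π f).mp hbc
      exact (ih hx hb).tail h
  constructor
  · intro h a ha
    exact h a (ha.lift Subtype.val fun a b hab => (step_graphOf_iff π f).mpr ⟨a.2, hab⟩)
  · intro h x hx
    obtain ⟨y, hxy, -⟩ := Relation.TransGen.head'_iff.mp hx
    have hxI : x ∉ I := ((step_graphOf_iff π f).mp hxy).1
    exact h ⟨x, hxI⟩ (restrict x x hx hxI hxI)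

theorem acset_graphOf_iff (π : Fin k ≃ {x : Fin n // x ∉ I}) (f : {x : Fin n // x ∉ I} → Fin n) :
    ACset n k I (graphOf π f) ↔ ∀ a, ¬ Relation.TransGen (funRel f) a a :=
  ⟨fun h => (acyclic_graphOf_iff π f).mp h.1,
    fun h => ⟨(acyclic_graphOf_iff π f).mpr h, Set.ext fun _ => isSink_graphOf_iff π f⟩⟩

theorem graphOf_injective :
    Function.Injective fun p : (Fin k ≃ {x : Fin n // x ∉ I}) × ({x : Fin n // x ∉ I} → Fin n) =>
      graphOf p.1 p.2 := by
  rintro ⟨π, f⟩ ⟨π', f'⟩ h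
  obtain rfl : π = π' := Equiv.ext fun e => Subtype.ext (congrArg Prod.fst (congrFun h e))
  refine Prod.ext rfl (funext fun a => ?_)
  simpa [graphOf] using congrArg Prod.snd (congrFun h (π.symm a))

/-- Each of the `k` non-sinks is the tail of some edge, so with `k` edges the tails are
a bijection onto the non-sinks. -/
theorem exists_graphOf_eq (hk : Fintype.card {x : Fin n // x ∉ I} = k) {G : DG n k}
    (hG : {v | isSink G v} = (I : Set (Fin n))) : ∃ π f, graphOf (I := I) π f = G := by
  have sink_iff : ∀ v, isSink G v ↔ v ∈ I := fun v => Set.ext_iff.mp hG v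
  let tail : Fin k → {x : Fin n // x ∉ I} := fun e => ⟨(G e).1, fun h => (sink_iff _).mpr h e rfl⟩
  have htail : Function.Bijective tail := by
    rw [Fintype.bijective_iff_surjective_and_card]
    refine ⟨fun v => ?_, by simp [hk]⟩
    obtain ⟨e, he⟩ := not_forall_not.mp fun h => v.2 ((sink_iff v).mp h)
    exact ⟨e, Subtype.ext he⟩
  let π := Equiv.ofBijective tail htail
  refine ⟨π, fun a => (G (π.symm a)).2, funext fun e => ?_⟩
  simp [graphOf, π, tail]

theorem sum_acset_eq_factorial_mul (hk : Fintype.card {x : Fin n // x ∉ I} = k)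
    (W : Matrix (Fin n) (Fin n) R) :
    (∑ G : DG n k, if ACset n k I G then ∏ e, W (G e).1 (G e).2 else 0)
      = (k ! : R) * ∑ f : {x : Fin n // x ∉ I} → Fin n,
          if ∀ a, ¬ Relation.TransGen (funRel f) a a then ∏ a : {x : Fin n // x ∉ I}, W a (f a)
          else 0 := by
  have hlabellings : Fintype.card (Fin k ≃ {x : Fin n // x ∉ I}) = k ! := by
    rw [Fintype.card_equiv (Fintype.equivFinOfCardEq hk).symm, Fintype.card_fin]
  have outside : ∀ G ∉ Set.range fun p : (Fin k ≃ {x : Fin n // x ∉ I}) × _ => graphOf p.1 p.2,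
      (if ACset n k I G then ∏ e, W (G e).1 (G e).2 else 0) = 0 := by
    intro G hG
    refine if_neg fun hAC => ?_
    obtain ⟨π, f, rfl⟩ := exists_graphOf_eq hk hAC.2
    exact hG ⟨(π, f), rfl⟩
  calc _ = ∑ p : (Fin k ≃ {x : Fin n // x ∉ I}) × ({x : Fin n // x ∉ I} → Fin n),
        if ∀ a, ¬ Relation.TransGen (funRel p.2) a a then
          ∏ a : {x : Fin n // x ∉ I}, W a (p.2 a) else 0 :=
      (Fintype.sum_of_injective _ graphOf_injective _ _ outside fun p =>
        if_congr (acset_graphOf_iff p.1 p.2).symm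
          (Equiv.prod_comp p.1 fun a => W a (p.2 a)).symm rfl).symm
    _ = _ := by
      simp only [Fintype.sum_prod_type, Finset.sum_const, Finset.card_univ, hlabellings,
        nsmul_eq_mul]

end DG

theorem matrix_tree_diag_general (R : Type*) [CommRing R] (n s : ℕ)
    (I : Finset (Fin n)) (hI : I.card = s) (W : Matrix (Fin n) (Fin n) R) :
    ((n - s)! : R) *
        Matrix.det (Matrix.of fun a b : {x : Fin n // x ∉ I} => DG.lapMat W a.1 b.1)
      = (-1) ^ (n - s) *
          ∑ G : DG n (n - s),
            if DG.ACset n (n - s) I G then ∏ e, W (G e).1 (G e).2 else 0 := by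
  have hcard : Fintype.card {x : Fin n // x ∉ I} = n - s := by
    rw [Fintype.card_subtype_compl, Fintype.card_coe, hI, Fintype.card_fin]
  rw [DG.sum_acset_eq_factorial_mul hcard, DG.det_lapMat_minor, hcard]
  ring

/-- matrix-tree theorem for diagonal minors of arbitrary codimension.
`(n−s)! · det M = (−1)^{n−s} · ∑_{G ∈ AC_{n,n−s}^I} ∏_{[ab]∈G} w_{ab}`, where `M` is the
submatrix of the Laplace matrix `Ŵ` with the rows and columns indexed by `I` deleted. -/
theorem matrix_tree_diag (R : Type*) [CommRing R] (n s : ℕ) (hs : s ≤ n)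
    (I : Finset (Fin n)) (hI : I.card = s) (W : Matrix (Fin n) (Fin n) R) :
    ((n - s)! : R) *
        Matrix.det (Matrix.of fun a b : {x : Fin n // x ∉ I} => DG.lapMat W a.1 b.1)
      = (-1) ^ (n - s) *
          ∑ G : DG n (n - s),
            if DG.ACset n (n - s) I G then ∏ e, W (G e).1 (G e).2 else 0 :=
  matrix_tree_diag_general R n s I hI W
end
end

section
/- For every undirected graph G with n labeled vertices and k labeled edges, Z_G(−1,−1) = (−1)^n · #{Φ ∈ AC_{n,k} : |Φ| = G}, i.e. the value of the Potts partition function at (q,v) = (−1,−1) equals (−1)^n times the number of acyclic orientations of G (assignments of a direction to each edge of G producing a directed graph with no directed cycle; this number is 0 if G has a loop). -/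
open Finset

open scoped Classical Nat

noncomputable section

/-- An undirected graph with `n` labeled vertices and `k` labeled edges: the `ℓ`-th edge is
an unordered pair of vertices (loops allowed). -/
abbrev UG (n k : ℕ) := Fin k → Sym2 (Fin n)

namespace UG

variable {n k : ℕ}

/-- Adjacency in the subgraph of `G` with edge-label set `S`. -/
def adj (G : UG n k) (S : Finset (Fin k)) (a b : Fin n) : Prop :=
  ∃ e ∈ S, G e = Sym2.mk a b

/-- `β₀`: the number of connected components (isolated vertices count as components). -/
def beta0 (G : UG n k) (S : Finset (Fin k)) : ℕ :=
  Nat.card (Quot (adj G S))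

/-- The Potts partition function of the subgraph of `G` with edge-label set `E`:
`Z(q,v) = ∑_{H ⊆ G|_E} q^{β₀(H)} v^{#edges of H}`.  The partition function of `G` itself
is `Zsub G Finset.univ`, and that of `G` with all loops deleted (`Ĝ`) is
`Zsub G {e | G e is not a loop}` (deleting loops changes neither `β₀` of a subgraph
nor the count of its non-loop edges, and a subgraph of `Ĝ` is exactly a subset of the
non-loop edges). -/
def Zsub (G : UG n k) (E : Finset (Fin k)) (q v : ℤ) : ℤ :=
  ∑ S ∈ E.powerset, q ^ beta0 G S * v ^ S.card

/-- The Potts partition function `Z_G(q,v)` of `G`. -/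
def Z (G : UG n k) (q v : ℤ) : ℤ :=
  Zsub G Finset.univ q v

end UG

/-- The forgetful map `Γ_{n,k} → Υ_{n,k}` replacing each directed edge by its undirected
version (labels preserved). -/
def DG.undir {n k : ℕ} (G : DG n k) : UG n k :=
  fun e => Sym2.mk (G e).1 (G e).2

/-!
Both sides obey the same deletion–contraction recursion in the number of edges. For a non-loop
edge `e = ab`, splitting the subgraphs by whether they contain `e` gives
`q · Z_G = q · Z_{G∖e} + v · Z_{G/e}` (contracting `e` leaves `b` behind as an isolated vertex),
i.e. `Z_G = Z_{G∖e} + Z_{G/e}` at `q = v = -1`, while a loop contributes the factor `1 + v = 0`.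
Orienting `e` as `a → b` keeps an acyclic orientation of `G∖e` acyclic iff it has no path
`b ⇝ a`; both orientations are possible exactly when `a` and `b` are incomparable, and collapsing
`b` onto `a` matches those orientations with the acyclic orientations of `G/e`. So the number of
acyclic orientations satisfies the same recursion, and with no edges both sides are `(-1)^n`.
-/

namespace Relation

variable {α : Type*} {r : α → α → Prop} {a b : α}

theorem reflTransGen_addEdge_cases {x y : α}
    (h : ReflTransGen (fun u v => r u v ∨ u = a ∧ v = b) x y) :
    ReflTransGen r x y ∨
      ReflTransGen (fun u v => r u v ∨ u = a ∧ v = b) x a ∧ ReflTransGen r b y := by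
  induction h with
  | refl => exact .inl .refl
  | tail hxz hzy ih =>
    rcases hzy with hzy | ⟨rfl, rfl⟩
    · exact ih.imp (·.tail hzy) (And.imp_right (·.tail hzy))
    · exact .inr ⟨hxz, .refl⟩

theorem acyclic_addEdge_iff :
    (∀ z, ¬ TransGen (fun u v => r u v ∨ u = a ∧ v = b) z z) ↔
      (∀ z, ¬ TransGen r z z) ∧ ¬ ReflTransGen r b a := by
  have hle : r ≤ fun u v => r u v ∨ u = a ∧ v = b := fun _ _ => .inl
  -- the part of a path `b ⇝ a` after its last use of the new edge `a → b` is an `r`-path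
  have hba (h : ReflTransGen (fun u v => r u v ∨ u = a ∧ v = b) b a) : ReflTransGen r b a :=
    (reflTransGen_addEdge_cases h).elim id And.right
  constructor
  · intro h
    exact ⟨fun z hz => h z (TransGen.mono hle _ _ hz),
      fun hba => h a (.head' (.inr ⟨rfl, rfl⟩) (ReflTransGen.mono hle _ _ hba))⟩
  · rintro ⟨hr, hnba⟩ z hz
    obtain ⟨c, hzc, hcz⟩ := TransGen.head'_iff.mp hz
    rcases hzc with hzc | ⟨rfl, rfl⟩
    · rcases reflTransGen_addEdge_cases hcz with hcz | ⟨hca, hbz⟩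
      · exact hr z (.head' hzc hcz)
      · exact hnba (hba ((ReflTransGen.mono hle _ _ (hbz.tail hzc)).trans hca))
    · exact hnba (hba hcz)

theorem not_reflTransGen_and_of_acyclic (hr : ∀ z, ¬ TransGen r z z) (hab : a ≠ b) :
    ¬ (ReflTransGen r a b ∧ ReflTransGen r b a) := by
  rintro ⟨hab', hba⟩
  rcases reflTransGen_iff_eq_or_transGen.mp hab' with rfl | hab'
  · exact hab rfl
  · exact hr a (hab'.trans_left hba)

theorem reflTransGen_swapEdge_cases (hab : ¬ ReflTransGen r a b) (hba : ¬ ReflTransGen r b a)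
    {x y : α} (h : ReflTransGen (fun u v => r u v ∨ u = a ∧ v = b ∨ u = b ∧ v = a) x y) :
    ReflTransGen r x y ∨ ReflTransGen r x a ∧ ReflTransGen r b y ∨
      ReflTransGen r x b ∧ ReflTransGen r a y := by
  induction h using ReflTransGen.head_induction_on with
  | refl => exact .inl .refl
  | head hxz _ ih =>
    rcases hxz with hxz | ⟨rfl, rfl⟩ | ⟨rfl, rfl⟩
    · exact ih.imp (·.head hxz) (Or.imp (And.imp_left (·.head hxz)) (And.imp_left (·.head hxz)))
    · rcases ih with h | ⟨h, -⟩ | ⟨-, h⟩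
      exacts [.inr (.inl ⟨.refl, h⟩), absurd h hba, .inl h]
    · rcases ih with h | ⟨-, h⟩ | ⟨h, -⟩
      exacts [.inr (.inr ⟨.refl, h⟩), .inl h, absurd h hab]

theorem card_quot_or_of_imp_eq {s : α → α → Prop} (hs : ∀ x y, s x y → x = y) :
    Nat.card (Quot fun x y => r x y ∨ s x y) = Nat.card (Quot r) :=
  Nat.card_congr
    { toFun := Quot.lift (Quot.mk r) fun x y h => h.elim Quot.sound (congrArg _ <| hs x y ·)
      invFun := Quot.lift (Quot.mk _) fun _ _ h => Quot.sound (.inl h)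
      left_inv := by rintro ⟨x⟩; rfl
      right_inv := by rintro ⟨x⟩; rfl }

variable [DecidableEq α]

theorem acyclic_map_update_id (hr : ∀ z, ¬ TransGen r z z) (hab : ¬ ReflTransGen r a b)
    (hba : ¬ ReflTransGen r b a) :
    ∀ z, ¬ TransGen (Relation.Map r (Function.update id b a) (Function.update id b a)) z z := by
  set f := Function.update id b a
  set J := fun u v => r u v ∨ u = a ∧ v = b ∨ u = b ∧ v = a
  -- collapsing `b` onto `a` turns paths into `J`-paths, which may jump between `a` and `b`
  have hf (x : α) : ReflTransGen J x (f x) ∧ ReflTransGen J (f x) x := by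
    by_cases hx : x = b
    · subst hx
      simp only [f, Function.update_self]
      exact ⟨.single (.inr (.inr ⟨rfl, rfl⟩)), .single (.inr (.inl ⟨rfl, rfl⟩))⟩
    · simp only [f, Function.update_of_ne hx, id]
      exact ⟨.refl, .refl⟩
  have hmap : ∀ x y, Relation.Map r f f x y → ReflTransGen J x y := by
    rintro _ _ ⟨u, v, huv, rfl, rfl⟩
    exact (hf u).2.trans (.head (.inl huv) (hf v).1)
  intro z hz
  obtain ⟨_, ⟨u, v, huv, rfl, rfl⟩, hvu⟩ := TransGen.head'_iff.mp hz
  have hvu : ReflTransGen J v u := (hf v).1.trans ((hvu.lift' id hmap).trans (hf u).2)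
  rcases reflTransGen_swapEdge_cases hab hba hvu with h | ⟨hva, hbu⟩ | ⟨hvb, hau⟩
  · exact hr u (.head' huv h)
  · exact hba (hbu.trans (.head huv hva))
  · exact hab (hau.trans (.head huv hvb))

theorem eq_or_sym2_eq_of_update_id_eq {x y : α}
    (h : Function.update id b a x = Function.update id b a y) :
    x = y ∨ s(x, y) = s(a, b) := by
  by_cases hx : x = b <;> by_cases hy : y = b <;>
    simp_all [Sym2.eq_swap]

theorem card_quot_map_update_id [Finite α] (hab : a ≠ b) :
    Nat.card (Quot (Relation.Map r (Function.update id b a) (Function.update id b a)))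
      = Nat.card (Quot fun x y => r x y ∨ s(a, b) = s(x, y)) + 1 := by
  set f := Function.update id b a
  set r' := fun x y => r x y ∨ s(a, b) = s(x, y)
  have hfb (x : α) : f x ≠ b := by
    by_cases hx : x = b <;> simp [f, hx, hab]
  have hfx (x : α) : Quot.mk r' (f x) = Quot.mk r' x := by
    by_cases hx : x = b
    · subst hx
      simp only [f, Function.update_self]
      exact Quot.sound (.inr rfl)
    · simp [f, Function.update_of_ne hx]
  -- `b` is isolated after the collapse, and becomes the extra class `none`
  let e : Quot (Relation.Map r f f) ≃ Option (Quot r') :=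
    { toFun := Quot.lift (fun x => if x = b then none else some (Quot.mk r' x)) <| by
        rintro _ _ ⟨u, v, huv, rfl, rfl⟩
        simp only [hfb, if_false, hfx]
        exact congrArg some (Quot.sound (.inl huv))
      invFun := fun o => o.elim (Quot.mk _ b) <| Quot.lift (fun x => Quot.mk _ (f x)) <| by
        rintro x y (hxy | hxy)
        · exact Quot.sound ⟨x, y, hxy, rfl, rfl⟩
        · rcases Sym2.eq_iff.mp hxy with ⟨rfl, rfl⟩ | ⟨rfl, rfl⟩ <;>
            simp [f, hab]
      left_inv := by
        rintro ⟨x⟩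
        by_cases hx : x = b
        · simp [hx]
        · simp [hx, f]
      right_inv := by
        rintro (_ | q)
        · simp
        · induction q using Quot.ind
          simp [hfb, hfx] }
  rw [Nat.card_congr e, Finite.card_option]

end Relation

open Relation

theorem Sym2.exists_mk_eq_of_map_eq {α β : Type*} {f : α → β} {z : Sym2 α} {x y : β}
    (h : z.map f = s(x, y)) : ∃ p : α × α, s(p.1, p.2) = z ∧ Prod.map f f p = (x, y) := by
  induction z using Sym2.ind with
  | h u v =>
    rcases Sym2.eq_iff.mp h with ⟨rfl, rfl⟩ | ⟨rfl, rfl⟩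
    · exact ⟨(u, v), rfl, rfl⟩
    · exact ⟨(v, u), Sym2.eq_swap, rfl⟩

namespace DG

variable {n k : ℕ}

theorem step_univ_cons (p : Fin n × Fin n) (Φ : DG n k) :
    step (Fin.cons p Φ : DG n (k + 1)) univ
      = fun x y => step Φ univ x y ∨ x = p.1 ∧ y = p.2 := by
  ext x y
  simp [step, Fin.exists_fin_succ, Prod.ext_iff, eq_comm, or_comm]

theorem acyclic_cons_iff {p : Fin n × Fin n} {Φ : DG n k} :
    Acyclic (Fin.cons p Φ : DG n (k + 1)) univ ↔
      Acyclic Φ univ ∧ ¬ ReflTransGen (step Φ univ) p.2 p.1 := by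
  rw [Acyclic, step_univ_cons]
  exact acyclic_addEdge_iff

theorem undir_cons (p : Fin n × Fin n) (Φ : DG n k) :
    undir (Fin.cons p Φ : DG n (k + 1)) = Fin.cons s(p.1, p.2) (undir Φ) :=
  Fin.comp_cons (fun p : Fin n × Fin n => s(p.1, p.2)) p Φ

theorem step_univ_prodMap_comp (f : Fin n → Fin n) (Φ : DG n k) :
    step (Prod.map f f ∘ Φ) univ = Relation.Map (step Φ univ) f f := by
  ext x y
  simp [step, Relation.Map, Prod.ext_iff]

end DG

namespace UG

variable {n k : ℕ}

/-- Contraction of `a` and `b` that keeps the vertex set `Fin n`: `b` is merged into `a` and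
left behind as an isolated vertex. -/
def contract (G : UG n k) (a b : Fin n) : UG n k :=
  fun ℓ => (G ℓ).map (Function.update id b a)

theorem adj_contract (G : UG n k) (a b : Fin n) (S : Finset (Fin k)) :
    adj (G.contract a b) S
      = Relation.Map (adj G S) (Function.update id b a) (Function.update id b a) := by
  ext x y
  constructor
  · rintro ⟨ℓ, hℓ, h⟩
    obtain ⟨⟨u, v⟩, huv, hxy⟩ := Sym2.exists_mk_eq_of_map_eq h
    simp only [Prod.map, Prod.mk.injEq] at hxy
    exact ⟨u, v, ⟨ℓ, hℓ, huv.symm⟩, hxy⟩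
  · rintro ⟨u, v, ⟨ℓ, hℓ, h⟩, rfl, rfl⟩
    exact ⟨ℓ, hℓ, by rw [contract, h, Sym2.map_mk]⟩

theorem adj_cons_image_succ (g : Sym2 (Fin n)) (G : UG n k) (T : Finset (Fin k)) :
    adj (Fin.cons g G : UG n (k + 1)) (T.image Fin.succ) = adj G T := by
  ext x y
  simp [adj]

theorem adj_cons_insert_zero (g : Sym2 (Fin n)) (G : UG n k) (T : Finset (Fin k)) :
    adj (Fin.cons g G : UG n (k + 1)) (insert 0 (T.image Fin.succ))
      = fun x y => adj G T x y ∨ g = s(x, y) := by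
  ext x y
  simp [adj, or_comm]

theorem beta0_empty (G : UG n k) : beta0 G ∅ = n := by
  refine (Nat.card_congr ?_).trans (Nat.card_fin n)
  exact
    { toFun := Quot.lift id fun _ _ ⟨_, h, _⟩ => absurd h (Finset.notMem_empty _)
      invFun := Quot.mk _
      left_inv := by rintro ⟨x⟩; rfl
      right_inv := fun _ => rfl }

theorem beta0_cons_insert_zero_loop (c : Fin n) (G : UG n k) (T : Finset (Fin k)) :
    beta0 (Fin.cons s(c, c) G : UG n (k + 1)) (insert 0 (T.image Fin.succ)) = beta0 G T := by
  rw [beta0, adj_cons_insert_zero]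
  exact card_quot_or_of_imp_eq fun x y h => by
    rcases Sym2.eq_iff.mp h with ⟨rfl, rfl⟩ | ⟨rfl, rfl⟩ <;> rfl

theorem beta0_contract {a b : Fin n} (hab : a ≠ b) (G : UG n k) (T : Finset (Fin k)) :
    beta0 (G.contract a b) T
      = beta0 (Fin.cons s(a, b) G : UG n (k + 1)) (insert 0 (T.image Fin.succ)) + 1 := by
  rw [beta0, beta0, adj_contract, adj_cons_insert_zero]
  exact card_quot_map_update_id hab

theorem Z_cons (g : Sym2 (Fin n)) (G : UG n k) (q v : ℤ) :
    Z (Fin.cons g G : UG n (k + 1)) q v = Z G q v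
      + v * ∑ T ∈ (univ : Finset (Fin k)).powerset,
          q ^ beta0 (Fin.cons g G : UG n (k + 1)) (insert 0 (T.image Fin.succ)) * v ^ #T := by
  have huniv : (univ : Finset (Fin (k + 1))) = insert 0 (univ.image Fin.succ) := by
    ext i; cases i using Fin.cases <;> simp
  have hinj : Set.InjOn (Finset.image (Fin.succ (n := k))) ↑(univ : Finset (Fin k)).powerset :=
    (Finset.image_injective (Fin.succ_injective k)).injOn
  rw [Z, Zsub, huniv, sum_powerset_insert (by simp), powerset_image, sum_image hinj,
    sum_image hinj, mul_sum, Z, Zsub]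
  congr 1
  · refine sum_congr rfl fun T _ => ?_
    rw [beta0, adj_cons_image_succ, card_image_of_injective _ (Fin.succ_injective k), ← beta0]
  · refine sum_congr rfl fun T _ => ?_
    rw [card_insert_of_notMem (by simp), card_image_of_injective _ (Fin.succ_injective k)]
    ring

theorem Z_cons_loop (c : Fin n) (G : UG n k) (q v : ℤ) :
    Z (Fin.cons s(c, c) G : UG n (k + 1)) q v = (1 + v) * Z G q v := by
  rw [Z_cons]
  simp only [beta0_cons_insert_zero_loop]
  rw [Z, Zsub]
  ring

theorem Z_cons_deletion_contraction {a b : Fin n} (hab : a ≠ b) (G : UG n k) (q v : ℤ) :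
    q * Z (Fin.cons s(a, b) G : UG n (k + 1)) q v = q * Z G q v + v * Z (G.contract a b) q v := by
  have hcontract : Z (G.contract a b) q v = q * ∑ T ∈ (univ : Finset (Fin k)).powerset,
      q ^ beta0 (Fin.cons s(a, b) G : UG n (k + 1)) (insert 0 (T.image Fin.succ)) * v ^ #T := by
    rw [Z, Zsub, mul_sum]
    exact sum_congr rfl fun T _ => by rw [beta0_contract hab, pow_succ]; ring
  rw [Z_cons, hcontract]
  ring

theorem Z_of_zero_edges (G : UG n 0) (q v : ℤ) : Z G q v = q ^ n := by
  simp [Z, Zsub, beta0_empty]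

def acyclicOrientations (G : UG n k) : Finset (DG n k) :=
  {Φ | DG.Acyclic Φ univ ∧ DG.undir Φ = G}

theorem mem_acyclicOrientations {G : UG n k} {Φ : DG n k} :
    Φ ∈ G.acyclicOrientations ↔ DG.Acyclic Φ univ ∧ DG.undir Φ = G := by
  simp [acyclicOrientations]

theorem card_acyclicOrientations_of_zero_edges (G : UG n 0) : #G.acyclicOrientations = 1 := by
  refine card_eq_one.mpr
    ⟨Fin.elim0, eq_singleton_iff_unique_mem.mpr ⟨?_, fun Φ _ => funext fun e => e.elim0⟩⟩
  refine mem_acyclicOrientations.mpr ⟨fun z hz => ?_, funext fun e => e.elim0⟩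
  obtain ⟨_, ⟨e, -⟩, -⟩ := TransGen.head'_iff.mp hz
  exact e.elim0

theorem acyclicOrientations_cons_loop (c : Fin n) (G : UG n k) :
    acyclicOrientations (Fin.cons s(c, c) G : UG n (k + 1)) = ∅ := by
  refine eq_empty_of_forall_notMem fun Φ hΦ => ?_
  obtain ⟨hacyc, hundir⟩ := mem_acyclicOrientations.mp hΦ
  have hΦ0 : Φ 0 = (c, c) := by
    have h0 : s((Φ 0).1, (Φ 0).2) = s((c, c).1, (c, c).2) := congrFun hundir 0
    simpa using Sym2.mk_eq_mk_iff.mp h0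
  exact hacyc c (.single ⟨0, mem_univ _, hΦ0⟩)

theorem cons_mem_acyclicOrientations_cons_iff {p : Fin n × Fin n} {Ψ : DG n k} {G : UG n k} :
    (Fin.cons p Ψ : DG n (k + 1))
        ∈ acyclicOrientations (Fin.cons s(p.1, p.2) G : UG n (k + 1)) ↔
      Ψ ∈ G.acyclicOrientations ∧ ¬ ReflTransGen (DG.step Ψ univ) p.2 p.1 := by
  simp only [mem_acyclicOrientations, DG.acyclic_cons_iff, DG.undir_cons, Fin.cons_inj, true_and]
  tauto

theorem card_filter_acyclicOrientations_cons (p : Fin n × Fin n) {g : Sym2 (Fin n)}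
    (hg : s(p.1, p.2) = g) (G : UG n k) :
    #{Φ ∈ acyclicOrientations (Fin.cons g G : UG n (k + 1)) | Φ 0 = p}
      = #{Ψ ∈ G.acyclicOrientations | ¬ ReflTransGen (DG.step Ψ univ) p.2 p.1} := by
  have hcons {Φ : DG n (k + 1)} (hΦ0 : Φ 0 = p) :
      (Fin.cons p (Fin.tail Φ) : DG n (k + 1)) = Φ :=
    hΦ0 ▸ Fin.cons_self_tail Φ
  subst hg
  refine card_nbij' Fin.tail (fun Ψ : DG n k => (Fin.cons p Ψ : DG n (k + 1))) (fun Φ hΦ => ?_)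
    (fun Ψ hΨ => ?_) (fun Φ hΦ => hcons (mem_filter.mp hΦ).2)
    (fun Ψ _ => Fin.tail_cons (α := fun _ => Fin n × Fin n) p Ψ)
  · obtain ⟨hΦ, hΦ0⟩ := mem_filter.mp hΦ
    rw [← hcons hΦ0, cons_mem_acyclicOrientations_cons_iff] at hΦ
    exact mem_filter.mpr hΦ
  · exact mem_filter.mpr
      ⟨cons_mem_acyclicOrientations_cons_iff.mpr (mem_filter.mp hΨ), Fin.cons_zero _ _⟩

theorem prodMap_comp_mem_acyclicOrientations_contract {a b : Fin n} {G : UG n k} {Ψ : DG n k}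
    (hΨ : Ψ ∈ G.acyclicOrientations) (hab : ¬ ReflTransGen (DG.step Ψ univ) a b)
    (hba : ¬ ReflTransGen (DG.step Ψ univ) b a) :
    Prod.map (Function.update id b a) (Function.update id b a) ∘ Ψ
      ∈ (G.contract a b).acyclicOrientations := by
  obtain ⟨hacyc, hundir⟩ := mem_acyclicOrientations.mp hΨ
  refine mem_acyclicOrientations.mpr ⟨?_, by rw [← hundir]; rfl⟩
  rw [DG.Acyclic, DG.step_univ_prodMap_comp]
  exact acyclic_map_update_id hacyc hab hba

theorem eq_of_prodMap_comp_eq {a b : Fin n} {Ψ₁ Ψ₂ : DG n k}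
    (hundir : DG.undir Ψ₁ = DG.undir Ψ₂) (hab : ¬ ReflTransGen (DG.step Ψ₂ univ) a b)
    (hba : ¬ ReflTransGen (DG.step Ψ₂ univ) b a)
    (h : Prod.map (Function.update id b a) (Function.update id b a) ∘ Ψ₁
      = Prod.map (Function.update id b a) (Function.update id b a) ∘ Ψ₂) :
    Ψ₁ = Ψ₂ := by
  funext ℓ
  rcases Sym2.mk_eq_mk_iff.mp (congrFun hundir ℓ) with h' | hswap
  · exact h'
  have hf : Function.update id b a (Ψ₂ ℓ).1 = Function.update id b a (Ψ₂ ℓ).2 := by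
    simpa [hswap] using congrArg Prod.snd (congrFun h ℓ)
  rcases eq_or_sym2_eq_of_update_id_eq hf with hxy | hxy
  · rw [hswap]
    exact Prod.ext hxy.symm hxy
  · -- otherwise `Ψ₂ ℓ` would be an edge between the incomparable `a` and `b`
    have hxy : s((Ψ₂ ℓ).1, (Ψ₂ ℓ).2) = s((a, b).1, (a, b).2) := hxy
    rcases Sym2.mk_eq_mk_iff.mp hxy with h' | h'
    · exact absurd (.single ⟨ℓ, mem_univ _, h'⟩) hab
    · exact absurd (.single ⟨ℓ, mem_univ _, h'⟩) hba

theorem exists_prodMap_comp_eq_of_mem_acyclicOrientations_contract {a b : Fin n} (hab : a ≠ b)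
    {G : UG n k} {Φ : DG n k} (hΦ : Φ ∈ (G.contract a b).acyclicOrientations) :
    ∃ Ψ ∈ G.acyclicOrientations,
      (¬ ReflTransGen (DG.step Ψ univ) b a ∧ ¬ ReflTransGen (DG.step Ψ univ) a b) ∧
        Prod.map (Function.update id b a) (Function.update id b a) ∘ Ψ = Φ := by
  set f := Function.update id b a
  obtain ⟨hacyc, hundir⟩ := mem_acyclicOrientations.mp hΦ
  have hlift (ℓ : Fin k) :
      ∃ p : Fin n × Fin n, s(p.1, p.2) = G ℓ ∧ Prod.map f f p = Φ ℓ :=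
    Sym2.exists_mk_eq_of_map_eq (congrFun hundir ℓ).symm
  choose Ψ hΨG hΨΦ using hlift
  have hΦ : Prod.map f f ∘ Ψ = Φ := funext hΨΦ
  have hpath {x y : Fin n} (h : TransGen (DG.step Ψ univ) x y) :
      TransGen (DG.step Φ univ) (f x) (f y) := by
    rw [← hΦ, DG.step_univ_prodMap_comp]
    exact h.lift f fun u v huv => ⟨u, v, huv, rfl, rfl⟩
  -- `f` glues `a` and `b`, so a path between them would become a cycle
  have hnot {x y : Fin n} (hxy : x ≠ y) (hf : f x = f y) :
      ¬ ReflTransGen (DG.step Ψ univ) x y := fun h => by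
    rcases reflTransGen_iff_eq_or_transGen.mp h with rfl | h
    · exact hxy rfl
    · exact hacyc _ (hf ▸ hpath h)
  have hfa : f a = a := by simp [f, hab]
  have hfb : f b = a := by simp [f]
  exact ⟨Ψ, mem_acyclicOrientations.mpr ⟨fun z hz => hacyc _ (hpath hz), funext hΨG⟩,
    ⟨hnot hab.symm (hfb.trans hfa.symm), hnot hab (hfa.trans hfb.symm)⟩, hΦ⟩

theorem card_filter_incomparable_acyclicOrientations {a b : Fin n} (hab : a ≠ b) (G : UG n k) :
    #{Ψ ∈ G.acyclicOrientations |
        ¬ ReflTransGen (DG.step Ψ univ) b a ∧ ¬ ReflTransGen (DG.step Ψ univ) a b}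
      = #(G.contract a b).acyclicOrientations := by
  refine card_nbij (Prod.map (Function.update id b a) (Function.update id b a) ∘ ·)
    (fun Ψ hΨ => ?_) (fun Ψ₁ hΨ₁ Ψ₂ hΨ₂ h => ?_) (fun Φ hΦ => ?_)
  · obtain ⟨hΨ, hba, hab'⟩ := mem_filter.mp hΨ
    exact prodMap_comp_mem_acyclicOrientations_contract hΨ hab' hba
  · obtain ⟨hΨ₁, -, -⟩ := mem_filter.mp hΨ₁
    obtain ⟨hΨ₂, hba, hab'⟩ := mem_filter.mp hΨ₂
    exact eq_of_prodMap_comp_eq ((mem_acyclicOrientations.mp hΨ₁).2.trans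
      (mem_acyclicOrientations.mp hΨ₂).2.symm) hab' hba h
  · obtain ⟨Ψ, hΨ, hinc, hΨΦ⟩ :=
      exists_prodMap_comp_eq_of_mem_acyclicOrientations_contract hab hΦ
    exact ⟨Ψ, mem_filter.mpr ⟨hΨ, hinc⟩, hΨΦ⟩

theorem card_acyclicOrientations_cons {a b : Fin n} (hab : a ≠ b) (G : UG n k) :
    #(acyclicOrientations (Fin.cons s(a, b) G : UG n (k + 1)))
      = #G.acyclicOrientations + #(G.contract a b).acyclicOrientations := by
  have horient : ∀ Φ ∈ acyclicOrientations (Fin.cons s(a, b) G : UG n (k + 1)),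
      ¬ Φ 0 = (a, b) ↔ Φ 0 = (b, a) := by
    intro Φ hΦ
    have h0 : s((Φ 0).1, (Φ 0).2) = s((a, b).1, (a, b).2) :=
      congrFun (mem_acyclicOrientations.mp hΦ).2 0
    rcases Sym2.mk_eq_mk_iff.mp h0 with h | h <;> simp [h, Prod.ext_iff, hab, hab.symm]
  have hab₁ : #{Φ ∈ acyclicOrientations (Fin.cons s(a, b) G : UG n (k + 1)) | Φ 0 = (a, b)}
      = #{Ψ ∈ G.acyclicOrientations | ¬ ReflTransGen (DG.step Ψ univ) b a} :=
    card_filter_acyclicOrientations_cons (a, b) rfl G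
  have hba₁ : #{Φ ∈ acyclicOrientations (Fin.cons s(a, b) G : UG n (k + 1)) | Φ 0 = (b, a)}
      = #{Ψ ∈ G.acyclicOrientations | ¬ ReflTransGen (DG.step Ψ univ) a b} :=
    card_filter_acyclicOrientations_cons (b, a) Sym2.eq_swap G
  have hcover : ∀ Ψ ∈ G.acyclicOrientations,
      ¬ ReflTransGen (DG.step Ψ univ) b a ∨ ¬ ReflTransGen (DG.step Ψ univ) a b :=
    fun Ψ hΨ => not_and_or.mp fun h =>
      not_reflTransGen_and_of_acyclic (mem_acyclicOrientations.mp hΨ).1 hab h.symm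
  rw [← card_filter_add_card_filter_not (fun Φ => Φ 0 = (a, b)), filter_congr horient,
    hab₁, hba₁, ← card_union_add_card_inter, ← filter_or, ← filter_and,
    filter_true_of_mem hcover, card_filter_incomparable_acyclicOrientations hab]

theorem Z_neg_one_neg_one (G : UG n k) :
    Z G (-1) (-1) = (-1) ^ n * #G.acyclicOrientations := by
  induction k with
  | zero => rw [Z_of_zero_edges, card_acyclicOrientations_of_zero_edges, Nat.cast_one, mul_one]
  | succ k ih =>
    rw [← Fin.cons_self_tail G]
    generalize G 0 = g
    induction g using Sym2.ind with
    | h a b =>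
      by_cases hab : a = b
      · subst hab
        rw [Z_cons_loop, acyclicOrientations_cons_loop]
        simp
      · rw [card_acyclicOrientations_cons hab, Nat.cast_add, mul_add, ← ih, ← ih]
        linarith [Z_cons_deletion_contraction hab (Fin.tail G) (-1) (-1)]

end UG

/-- For every undirected graph `G ∈ Υ_{n,k}`,
`Z_G(−1,−1) = (−1)^n · #{Φ ∈ AC_{n,k} : |Φ| = G}`, the number of acyclic orientations
of `G` (this number is `0` if `G` has a loop). -/
theorem potts_acyclic_orientations (n k : ℕ) (G : UG n k) :
    UG.Z G (-1) (-1)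
      = (-1) ^ n
          * (Nat.card {Φ : DG n k // DG.Acyclic Φ Finset.univ ∧ DG.undir Φ = G} : ℤ) := by
  rw [UG.Z_neg_one_neg_one, Nat.card_eq_fintype_card, Fintype.card_subtype]
  rfl
end
end
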